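/- arXiv:1906.02270 — 8 statements merged into one kernel-verified Lean document; each statement's English description precedes it below -/
import Mathlib

section
/- Let E = c₀ (the complex Banach space of scalar sequences converging to 0, with the sup norm) and let B be its open unit ball. Then the set of functions f ∈ H^∞(B) such that for every x ∈ B the cluster set Cl(f,x) contains a disk (i.e., there exist c ∈ ℂ and r > 0 with the disk of center c and radius r contained in Cl(f,x)) is strongly 𝔠-algebrable. -/
open Metric Set Filter
open scoped ENNReal NNReal

noncomputable section

variable {E : Type*} [NormedAddCommGroup E] [NormedSpace ℂ E]

/-- The canonical embedding of `E` into its bidual. -/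
def iotaBidual (x : E) : StrongDual ℂ (StrongDual ℂ E) :=
  NormedSpace.inclusionInDoubleDual ℂ E x

/-- Membership in `H^∞(B)`: bounded holomorphic functions on the open unit ball. -/
def MemHinf (f : E → ℂ) : Prop :=
  DifferentiableOn ℂ f (ball (0 : E) 1) ∧ ∃ C : ℝ, ∀ x ∈ ball (0 : E) 1, ‖f x‖ ≤ C

/-- Cluster set of `f` at a point `z` of the bidual, with respect to the weak-star topology. -/
def clusterSetW (f : E → ℂ) (z : StrongDual ℂ (StrongDual ℂ E)) : Set ℂ :=
  {l : ℂ | ∀ U : Set (WeakDual ℂ (StrongDual ℂ E)), IsOpen U →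
      StrongDual.toWeakDual z ∈ U →
      l ∈ closure (f '' ((fun x : E => StrongDual.toWeakDual (iotaBidual x)) ⁻¹' U
        ∩ ball (0 : E) 1))}

/-- Sequential cluster set of `f` at a point `z` (used in the finite-dimensional case). -/
def clusterSetSeq (f : E → ℂ) (z : E) : Set ℂ :=
  {l : ℂ | ∃ x : ℕ → E, (∀ k, x k ∈ ball (0 : E) 1) ∧
      Tendsto x atTop (nhds z) ∧ Tendsto (fun k => f (x k)) atTop (nhds l)}

/-- A set `M` of complex-valued functions is strongly 𝔠-algebrable. -/
def StronglyCAlgebrable {α : Type*} (M : Set (α → ℂ)) : Prop :=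
  ∃ G : Set (α → ℂ), Cardinal.mk G = Cardinal.continuum ∧
    AlgebraicIndependent ℂ ((↑) : G → (α → ℂ)) ∧
    (NonUnitalAlgebra.adjoin ℂ G : Set (α → ℂ)) ⊆ M ∪ {0}

namespace Stmt5

open scoped Topology

abbrev E0 : Type := ZeroAtInftyContinuousMap ℕ ℂ

lemma apply_norm_le (f : E0) (n : ℕ) : ‖f n‖ ≤ ‖f‖ := by
  rw [← ZeroAtInftyContinuousMap.norm_toBCF_eq_norm]
  exact BoundedContinuousFunction.norm_coe_le_norm f.toBCF n

lemma norm_le_of_forall {f : E0} {C : ℝ} (hC : 0 ≤ C) (h : ∀ n, ‖f n‖ ≤ C) : ‖f‖ ≤ C := by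
  rw [← ZeroAtInftyContinuousMap.norm_toBCF_eq_norm]
  exact (BoundedContinuousFunction.norm_le hC).2 h

/-- The element of `c₀` supported at one point. -/
def sing (m : ℕ) (c : ℂ) : E0 where
  toFun := fun n => if n = m then c else 0
  continuous_toFun := continuous_of_discreteTopology
  zero_at_infty' := by
    rw [cocompact_eq_cofinite, Nat.cofinite_eq_atTop]
    refine tendsto_const_nhds.congr' ?_
    filter_upwards [Filter.eventually_gt_atTop m] with n hn
    simp [(Nat.ne_of_gt hn)]

@[simp] lemma sing_apply (m : ℕ) (c : ℂ) (n : ℕ) : sing m c n = if n = m then c else 0 := rfl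

lemma sing_apply_self (m : ℕ) (c : ℂ) : sing m c m = c := by simp

lemma sing_apply_ne (m : ℕ) (c : ℂ) {n : ℕ} (h : n ≠ m) : sing m c n = 0 := by simp [h]

lemma norm_sing_le (m : ℕ) (c : ℂ) : ‖sing m c‖ ≤ ‖c‖ := by
  refine norm_le_of_forall (norm_nonneg _) fun n => ?_
  by_cases h : n = m <;> simp [h]

lemma sing_eq_smul (m : ℕ) (c : ℂ) : sing m c = c • sing m 1 := by
  ext n
  by_cases h : n = m <;> simp [h]

/-- Evaluation at a coordinate, as a continuous linear functional on `c₀`. -/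
def evCLM (n : ℕ) : E0 →L[ℂ] ℂ :=
  LinearMap.mkContinuous
    { toFun := fun f => f n
      map_add' := fun f g => by simp
      map_smul' := fun c f => by simp }
    1 (fun f => by simpa using apply_norm_le f n)

@[simp] lemma evCLM_apply (n : ℕ) (f : E0) : evCLM n f = f n := rfl

lemma norm_evCLM_le (n : ℕ) : ‖evCLM n‖ ≤ 1 :=
  LinearMap.mkContinuous_norm_le _ zero_le_one _

/-- The Möbius transformation of the unit disc onto the left half plane. -/
def phi (z : ℂ) : ℂ := (z - 1) / (z + 1)

lemma phi_denom_ne {z : ℂ} (hz : ‖z‖ < 1) : z + 1 ≠ 0 := by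
  intro h
  have : z = -1 := by linear_combination h
  rw [this] at hz
  simp at hz

lemma norm_one_sub_le {z : ℂ} {r : ℝ} (h : ‖z‖ ≤ r) : 1 - r ≤ ‖z + 1‖ := by
  have h1 := norm_sub_norm_le (1 : ℂ) (-z)
  simp only [norm_one, norm_neg, sub_neg_eq_add] at h1
  rw [add_comm]
  linarith

lemma norm_phi_le {z : ℂ} {r : ℝ} (h : ‖z‖ ≤ r) (hr : r < 1) : ‖phi z‖ ≤ 2 / (1 - r) := by
  have hr0 : 0 ≤ r := le_trans (norm_nonneg z) h
  have h1 : 1 - r ≤ ‖z + 1‖ := norm_one_sub_le h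
  have h2 : ‖z - 1‖ ≤ 2 := by
    have := norm_sub_le z 1
    simp only [norm_one] at this
    linarith
  rw [phi, norm_div]
  exact div_le_div₀ (by norm_num) h2 (by linarith) h1

lemma phi_re_eq {z : ℂ} : (phi z).re = (Complex.normSq z - 1) / Complex.normSq (z + 1) := by
  rw [phi, Complex.div_re]
  rw [← add_div]
  congr 1
  simp [Complex.normSq_apply]
  ring

lemma phi_re_nonpos {z : ℂ} (hz : ‖z‖ < 1) : (phi z).re ≤ 0 := by
  rw [phi_re_eq]
  apply div_nonpos_of_nonpos_of_nonneg _ (Complex.normSq_nonneg _)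
  have : Complex.normSq z = ‖z‖ ^ 2 := by
    rw [Complex.normSq_eq_norm_sq]
  nlinarith [norm_nonneg z]

lemma hasDerivAt_phi {z : ℂ} (hz : z + 1 ≠ 0) : HasDerivAt phi (2 / (z + 1) ^ 2) z := by
  have h := ((hasDerivAt_id z).sub_const 1).div ((hasDerivAt_id z).add_const 1) hz
  exact h.congr_deriv (by simp only [id]; ring)

lemma norm_phi_deriv_le {z : ℂ} {r : ℝ} (h : ‖z‖ ≤ r) (hr : r < 1) :
    ‖2 / (z + 1) ^ 2‖ ≤ 2 / (1 - r) ^ 2 := by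
  have hr0 : 0 ≤ r := le_trans (norm_nonneg z) h
  have h1 : 1 - r ≤ ‖z + 1‖ := norm_one_sub_le h
  rw [norm_div, norm_pow]
  have h2 : (1 - r) ^ 2 ≤ ‖z + 1‖ ^ 2 := by nlinarith
  simp only [Complex.norm_ofNat]
  exact div_le_div₀ (by norm_num) le_rfl (by nlinarith) h2

/-! ### The master function `G` -/

/-- Geometric weights. -/
def cc (n : ℕ) : ℝ := (1 / 2 : ℝ) ^ (n + 1)

lemma cc_pos (n : ℕ) : 0 < cc n := by unfold cc; positivity

lemma cc_ne (n : ℕ) : (cc n : ℂ) ≠ 0 := by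
  simp only [ne_eq, Complex.ofReal_eq_zero]
  exact (cc_pos n).ne'

/-- The master holomorphic function on the ball of `c₀`. -/
def Gf (x : E0) : ℂ := ∑' n, (cc n : ℂ) * phi (x n)

lemma norm_term_le {x : E0} {r : ℝ} (hr : r < 1) (h : ∀ n, ‖x n‖ ≤ r) (n : ℕ) :
    ‖(cc n : ℂ) * phi (x n)‖ ≤ (1 / 2 : ℝ) ^ n * (1 / (1 - r)) := by
  rw [norm_mul, Complex.norm_real, Real.norm_eq_abs, abs_of_pos (cc_pos n)]
  have := norm_phi_le (h n) hr
  calc cc n * ‖phi (x n)‖ ≤ cc n * (2 / (1 - r)) := by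
        exact mul_le_mul_of_nonneg_left this (cc_pos n).le
    _ = (1 / 2 : ℝ) ^ n * (1 / (1 - r)) := by
        rw [cc, pow_succ]
        ring

lemma summable_term {x : E0} {r : ℝ} (hr : r < 1) (h : ∀ n, ‖x n‖ ≤ r) :
    Summable (fun n => (cc n : ℂ) * phi (x n)) := by
  apply Summable.of_norm_bounded (g := fun n => (1 / 2 : ℝ) ^ n * (1 / (1 - r)))
  · exact (summable_geometric_of_lt_one (by norm_num) (by norm_num)).mul_right _
  · exact norm_term_le hr h

lemma summable_term_ball {x : E0} (hx : ‖x‖ < 1) :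
    Summable (fun n => (cc n : ℂ) * phi (x n)) :=
  summable_term hx (fun n => apply_norm_le x n)

lemma Gf_re_nonpos {x : E0} (hx : ‖x‖ < 1) : (Gf x).re ≤ 0 := by
  have hs := summable_term_ball hx
  have : (Gf x).re = ∑' n, ((cc n : ℂ) * phi (x n)).re := by
    exact (Complex.reCLM.map_tsum hs)
  rw [this]
  apply tsum_nonpos
  intro n
  rw [Complex.re_ofReal_mul]
  exact mul_nonpos_of_nonneg_of_nonpos (cc_pos n).le
    (phi_re_nonpos ((apply_norm_le x n).trans_lt hx))

lemma hasFDerivAt_term {r : ℝ} (hr : r < 1) (n : ℕ) {x : E0} (hx : x ∈ ball (0 : E0) r) :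
    HasFDerivAt (fun y : E0 => (cc n : ℂ) * phi (y n))
      (((cc n : ℂ) * (2 / (x n + 1) ^ 2)) • evCLM n) x := by
  simp only [mem_ball, dist_zero_right] at hx
  have hxn : ‖x n‖ < 1 := ((apply_norm_le x n).trans_lt hx).trans_le hr.le
  have h1 : HasDerivAt (fun z : ℂ => (cc n : ℂ) * phi z)
      ((cc n : ℂ) * (2 / (x n + 1) ^ 2)) (x n) :=
    (hasDerivAt_phi (phi_denom_ne hxn)).const_mul _
  have h2 : HasFDerivAt (fun y : E0 => y n) (evCLM n) x := (evCLM n).hasFDerivAt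
  have := h1.comp_hasFDerivAt x h2
  exact this

lemma norm_term_deriv_le {r : ℝ} (hr : r < 1) (n : ℕ) {x : E0} (hx : x ∈ ball (0 : E0) r) :
    ‖((cc n : ℂ) * (2 / (x n + 1) ^ 2)) • evCLM n‖ ≤ cc n * (2 / (1 - r) ^ 2) := by
  simp only [mem_ball, dist_zero_right] at hx
  have hxn : ‖x n‖ ≤ r := (apply_norm_le x n).trans hx.le
  have hco : ‖(cc n : ℂ) * (2 / (x n + 1) ^ 2)‖ ≤ cc n * (2 / (1 - r) ^ 2) := by
    rw [norm_mul, Complex.norm_real, Real.norm_eq_abs, abs_of_pos (cc_pos n)]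
    exact mul_le_mul_of_nonneg_left (norm_phi_deriv_le hxn hr) (cc_pos n).le
  apply ContinuousLinearMap.opNorm_le_bound _ (mul_nonneg (cc_pos n).le (by positivity))
  intro f
  rw [ContinuousLinearMap.smul_apply, norm_smul, evCLM_apply]
  exact mul_le_mul hco (apply_norm_le f n) (norm_nonneg _)
    (mul_nonneg (cc_pos n).le (by positivity))

lemma summable_cc : Summable cc := by
  have h : Summable (fun n : ℕ => (1 / 2 : ℝ) ^ n) :=
    summable_geometric_of_lt_one (by norm_num) (by norm_num)
  exact (h.comp_injective (add_left_injective 1)).congr (fun n => rfl)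

lemma summable_cc_mul (C : ℝ) : Summable (fun n => cc n * C) := summable_cc.mul_right C

lemma differentiableOn_Gf : DifferentiableOn ℂ Gf (ball (0 : E0) 1) := by
  intro x hx
  simp only [mem_ball, dist_zero_right] at hx
  set r : ℝ := (1 + ‖x‖) / 2 with hr_def
  have hr1 : r < 1 := by rw [hr_def]; linarith
  have hxr : x ∈ ball (0 : E0) r := by
    simp only [mem_ball, dist_zero_right]
    rw [hr_def]; linarith [norm_nonneg x]
  have h0r : (0 : E0) ∈ ball (0 : E0) r := by
    simp only [mem_ball, dist_self]
    rw [hr_def]; linarith [norm_nonneg x]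
  have key : HasFDerivAt Gf
      (∑' n, ((cc n : ℂ) * (2 / (x n + 1) ^ 2)) • evCLM n) x := by
    apply hasFDerivAt_tsum_of_isPreconnected (summable_cc_mul (2 / (1 - r) ^ 2))
      isOpen_ball (convex_ball _ _).isPreconnected
      (fun n y hy => hasFDerivAt_term hr1 n hy)
      (fun n y hy => norm_term_deriv_le hr1 n hy) h0r ?_ hxr
    apply summable_term hr1
    intro n
    simp only [ZeroAtInftyContinuousMap.coe_zero, Pi.zero_apply, norm_zero]
    rw [hr_def]; linarith [norm_nonneg x]
  exact key.differentiableAt.differentiableWithinAt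

/-- The single-coordinate exact perturbation lemma: inside the ball one can change `Gf`
by any increment in the left half-plane by modifying one single coordinate. -/
lemma attain {x : E0} (hx : ‖x‖ < 1) {l : ℂ} (hl : l.re < 0) (m : ℕ) :
    ∃ u : ℂ, ‖u‖ < 1 ∧ ‖x + sing m (u - x m)‖ < 1 ∧
      Gf (x + sing m (u - x m)) = Gf x + l := by
  have hxm : ‖x m‖ < 1 := (apply_norm_le x m).trans_lt hx
  set v : ℂ := phi (x m) + ((cc m : ℂ))⁻¹ * l with hv_def
  have hvre : v.re < 0 := by
    rw [hv_def]
    have h1 : (((cc m : ℂ))⁻¹ * l).re = (cc m)⁻¹ * l.re := by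
      rw [← Complex.ofReal_inv, Complex.re_ofReal_mul]
    have h2 : (cc m)⁻¹ * l.re < 0 :=
      mul_neg_of_pos_of_neg (inv_pos.2 (cc_pos m)) hl
    have := phi_re_nonpos hxm
    simp only [Complex.add_re]
    rw [h1]
    linarith
  have h1v : (1 : ℂ) - v ≠ 0 := by
    intro h
    have : (1 - v).re = 0 := by rw [h]; simp
    simp only [Complex.sub_re, Complex.one_re] at this
    linarith
  set u : ℂ := (1 + v) / (1 - v) with hu_def
  have hu_norm : ‖u‖ < 1 := by
    rw [hu_def, norm_div]
    rw [div_lt_one (norm_pos_iff.mpr h1v)]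
    have e1 : ‖(1 : ℂ) + v‖ ^ 2 = Complex.normSq (1 + v) := by
      rw [Complex.normSq_eq_norm_sq]
    have e2 : ‖(1 : ℂ) - v‖ ^ 2 = Complex.normSq (1 - v) := by
      rw [Complex.normSq_eq_norm_sq]
    have key : Complex.normSq (1 + v) < Complex.normSq (1 - v) := by
      simp only [Complex.normSq_apply, Complex.add_re, Complex.add_im, Complex.sub_re,
        Complex.sub_im, Complex.one_re, Complex.one_im]
      nlinarith [hvre]
    nlinarith [norm_nonneg ((1:ℂ) + v), norm_nonneg ((1:ℂ) - v), e1, e2, key]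
  have hphi_u : phi u = v := by
    rw [phi, hu_def]
    have h2 : (1 + v) / (1 - v) + 1 = 2 / (1 - v) := by field_simp; ring
    have h3 : (1 + v) / (1 - v) - 1 = 2 * v / (1 - v) := by field_simp; ring
    rw [h2, h3]
    rw [div_eq_iff (div_ne_zero two_ne_zero h1v)]
    ring
  set y : E0 := x + sing m (u - x m) with hy_def
  have hyn : ∀ n, n ≠ m → y n = x n := by
    intro n h
    show x n + sing m (u - x m) n = x n
    rw [sing_apply_ne _ _ h, add_zero]
  have hym : y m = u := by
    show x m + sing m (u - x m) m = u
    rw [sing_apply_self]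
    ring
  have hynorm : ‖y‖ < 1 := by
    have hb : ∀ n, ‖y n‖ ≤ max ‖x‖ ‖u‖ := by
      intro n
      by_cases h : n = m
      · subst h; rw [hym]; exact le_max_right _ _
      · rw [hyn n h]; exact (apply_norm_le x n).trans (le_max_left _ _)
    exact (norm_le_of_forall (le_max_of_le_right (norm_nonneg u)) hb).trans_lt
      (max_lt hx hu_norm)
  refine ⟨u, hu_norm, hynorm, ?_⟩
  have hsx := summable_term_ball hx
  have hsy := summable_term_ball hynorm
  have hdiff : ∀ n, (cc n : ℂ) * phi (y n) - (cc n : ℂ) * phi (x n)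
      = if n = m then l else 0 := by
    intro n
    by_cases h : n = m
    · subst h
      rw [hym, hphi_u, hv_def, if_pos rfl]
      rw [mul_add, mul_inv_cancel_left₀ (cc_ne n)]
      ring
    · rw [hyn n h, if_neg h, sub_self]
  have h1 : ∑' n, ((cc n : ℂ) * phi (y n) - (cc n : ℂ) * phi (x n)) = Gf y - Gf x :=
    hsy.tsum_sub hsx
  rw [tsum_congr hdiff, tsum_ite_eq] at h1
  linear_combination -h1

/-! ### Weak-star approximation -/

lemma finsum_apply {ι : Type*} (F : Finset ι) (f : ι → E0) (k : ℕ) :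
    (∑ i ∈ F, f i) k = ∑ i ∈ F, f i k := by
  classical
  induction F using Finset.induction_on with
  | empty => simp
  | insert _ _ h ih =>
      rw [Finset.sum_insert h, Finset.sum_insert h, ← ih]
      rfl

lemma summable_dual_coords (ψ : StrongDual ℂ E0) :
    Summable (fun n => ‖ψ (sing n 1)‖) := by
  classical
  apply summable_of_sum_le (fun n => norm_nonneg _)
  intro F
  set a : ℕ → ℂ := fun n =>
    if ψ (sing n 1) = 0 then 1 else (starRingEnd ℂ) (ψ (sing n 1)) / ‖ψ (sing n 1)‖
    with ha_def
  have ha_norm : ∀ n, ‖a n‖ ≤ 1 := by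
    intro n
    rw [ha_def]
    by_cases h : ψ (sing n 1) = 0
    · simp [h]
    · simp only [if_neg h]
      rw [norm_div, RingHomIsometric.norm_map]
      simp only [Complex.norm_real, norm_norm]
      rw [div_self (norm_ne_zero_iff.mpr h)]
  have ha_mul : ∀ n, a n * ψ (sing n 1) = (‖ψ (sing n 1)‖ : ℂ) := by
    intro n
    rw [ha_def]
    by_cases h : ψ (sing n 1) = 0
    · simp [h]
    · simp only [if_neg h]
      have hz : (‖ψ (sing n 1)‖ : ℂ) ≠ 0 := by
        exact_mod_cast norm_ne_zero_iff.mpr h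
      rw [div_mul_eq_mul_div, mul_comm, Complex.mul_conj, div_eq_iff hz]
      rw [← Complex.ofReal_mul]
      norm_cast
      rw [Complex.normSq_eq_norm_sq, sq]
  set v : E0 := ∑ n ∈ F, sing n (a n) with hv_def
  have hv_norm : ‖v‖ ≤ 1 := by
    apply norm_le_of_forall zero_le_one
    intro k
    rw [hv_def, finsum_apply]
    simp only [sing_apply]
    rw [Finset.sum_ite_eq F k a]
    by_cases h : k ∈ F
    · rw [if_pos h]; exact ha_norm k
    · rw [if_neg h]; simp
  have hψv : ψ v = ∑ n ∈ F, (‖ψ (sing n 1)‖ : ℂ) := by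
    rw [hv_def, map_sum]
    apply Finset.sum_congr rfl
    intro n _
    rw [sing_eq_smul, map_smul, smul_eq_mul, ha_mul]
  have : (∑ n ∈ F, ‖ψ (sing n 1)‖) = ‖ψ v‖ := by
    rw [hψv]
    rw [← Complex.ofReal_sum]
    rw [Complex.norm_real, Real.norm_eq_abs, abs_of_nonneg]
    exact Finset.sum_nonneg fun n _ => norm_nonneg _
  rw [this]
  calc ‖ψ v‖ ≤ ‖ψ‖ * ‖v‖ := ψ.le_opNorm v
    _ ≤ ‖ψ‖ * 1 := mul_le_mul_of_nonneg_left hv_norm (norm_nonneg ψ)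
    _ = ‖ψ‖ := mul_one _

lemma tendsto_dual_coords (ψ : StrongDual ℂ E0) :
    Tendsto (fun n => ψ (sing n 1)) atTop (𝓝 0) :=
  tendsto_zero_iff_norm_tendsto_zero.mpr (summable_dual_coords ψ).tendsto_atTop_zero

/-- Any value of the form `F w` with `Re w < Re (Gf x)` is in the weak-star cluster set of
`F ∘ Gf` at an interior point `x`. -/
lemma mem_clusterSetW_comp (F : ℂ → ℂ) {x : E0} (hx : ‖x‖ < 1) {w : ℂ}
    (hw : w.re < (Gf x).re) :
    F w ∈ clusterSetW (fun y => F (Gf y)) (iotaBidual x) := by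
  intro U hU hmem
  set l : ℂ := w - Gf x with hl_def
  have hl : l.re < 0 := by
    rw [hl_def, Complex.sub_re]
    linarith
  choose u hu hynorm hGfy using fun m => attain hx hl m
  set y : ℕ → E0 := fun m => x + sing m (u m - x m) with hy_def
  have hGfy' : ∀ m, Gf (y m) = w := by
    intro m
    rw [hy_def]
    simp only
    rw [hGfy m, hl_def]
    ring
  have hten : Tendsto (fun m => StrongDual.toWeakDual (iotaBidual (y m))) atTop
      (𝓝 (StrongDual.toWeakDual (iotaBidual x))) := by
    rw [tendsto_iff_forall_eval_tendsto_topDualPairing]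
    intro ψ
    have key : ∀ z : E0,
        topDualPairing ℂ _ (StrongDual.toWeakDual (iotaBidual z)) ψ = ψ z := fun z => rfl
    simp only [key]
    have heq : ∀ m, ψ (y m) = ψ x + (u m - x m) * ψ (sing m 1) := by
      intro m
      rw [hy_def]
      simp only
      rw [map_add, sing_eq_smul, map_smul, smul_eq_mul]
    rw [funext heq]
    have h2 : Tendsto (fun m => (u m - x m) * ψ (sing m 1)) atTop (𝓝 0) := by
      apply squeeze_zero_norm (a := fun m => 2 * ‖ψ (sing m 1)‖)
      · intro m
        rw [norm_mul]
        apply mul_le_mul_of_nonneg_right _ (norm_nonneg _)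
        have := norm_sub_le (u m) (x m)
        have h3 := apply_norm_le x m
        linarith [ (hu m).le ]
      · simpa using ((tendsto_dual_coords ψ).norm.const_mul 2)
    simpa using tendsto_const_nhds.add h2
  have hev : ∀ᶠ m in atTop, StrongDual.toWeakDual (iotaBidual (y m)) ∈ U :=
    hten.eventually (hU.eventually_mem hmem)
  obtain ⟨m, hm⟩ := hev.exists
  apply subset_closure
  refine ⟨y m, ⟨hm, ?_⟩, ?_⟩
  · simp only [mem_ball, dist_zero_right]
    exact hynorm m
  · show F (Gf (y m)) = F w
    rw [hGfy' m]

/-! ### Exponential sums -/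

/-- The entire function attached to an element of the monoid algebra on `(ℝ, +)`. -/
def ExpF (mu : MonoidAlgebra ℂ (Multiplicative ℝ)) (z : ℂ) : ℂ :=
  ∑ s ∈ mu.coeff.support, mu.coeff s * Complex.exp ((Multiplicative.toAdd s : ℝ) * z)

/-- The additive character `z ↦ exp (t z)` as a monoid hom. -/
def expChar (t : ℝ) : Multiplicative ℂ →* ℂ where
  toFun := fun z => Complex.exp (t * Multiplicative.toAdd z)
  map_one' := by simp
  map_mul' := fun a b => by
    simp only [toAdd_mul]
    rw [← Complex.exp_add]
    ring_nf

lemma expChar_injective : Function.Injective expChar := by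
  intro t t' h
  have h1 := congrArg (fun f : Multiplicative ℂ →* ℂ => f (Multiplicative.ofAdd (1 : ℂ))) h
  simp only [expChar, MonoidHom.coe_mk, OneHom.coe_mk, toAdd_ofAdd,
    mul_one] at h1
  have habs := congrArg (fun z : ℂ => ‖z‖) h1
  rw [Complex.norm_exp, Complex.norm_exp] at habs
  simp only [Complex.ofReal_re] at habs
  exact Real.exp_eq_exp.mp habs

/-- Dedekind's theorem: vanishing exponential sums have zero coefficients. -/
lemma expsum_coeffs_zero (A : Finset (Multiplicative ℝ)) (co : Multiplicative ℝ → ℂ)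
    (h : ∀ z : ℂ, ∑ s ∈ A, co s * Complex.exp ((Multiplicative.toAdd s : ℝ) * z) = 0) :
    ∀ s ∈ A, co s = 0 := by
  classical
  have li0 := linearIndependent_monoidHom (Multiplicative ℂ) ℂ
  have li : LinearIndependent ℂ
      (fun s : Multiplicative ℝ => ((expChar (Multiplicative.toAdd s)) : Multiplicative ℂ → ℂ)) :=
    li0.comp (fun s => expChar (Multiplicative.toAdd s))
      (fun s s' hss => Multiplicative.toAdd.injective (expChar_injective hss))
  have key := linearIndependent_iff'.mp li A co ?_
  · exact key
  · funext z
    have h2 := h (Multiplicative.toAdd z)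
    simp only [Finset.sum_apply, Pi.smul_apply, Pi.zero_apply]
    rw [← h2]
    apply Finset.sum_congr rfl
    intro s _
    rw [smul_eq_mul]
    rfl

lemma differentiable_ExpF (mu : MonoidAlgebra ℂ (Multiplicative ℝ)) :
    Differentiable ℂ (ExpF mu) := by
  apply Differentiable.fun_sum
  intro s _
  exact (differentiable_const _).mul ((differentiable_id.const_mul _).cexp)

lemma hasStrictDerivAt_ExpF (mu : MonoidAlgebra ℂ (Multiplicative ℝ)) (z : ℂ) :
    HasStrictDerivAt (ExpF mu)
      (∑ s ∈ mu.coeff.support,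
        mu.coeff s * ((Multiplicative.toAdd s : ℝ) *
          Complex.exp ((Multiplicative.toAdd s : ℝ) * z))) z := by
  apply HasStrictDerivAt.fun_sum
  intro s _
  have h1 : HasStrictDerivAt (fun w : ℂ => ((Multiplicative.toAdd s : ℝ) : ℂ) * w)
      ((Multiplicative.toAdd s : ℝ) : ℂ) z := by
    simpa using (hasStrictDerivAt_id z).const_mul (((Multiplicative.toAdd s : ℝ)) : ℂ)
  have h2 := h1.cexp.const_mul (mu.coeff s)
  exact h2.congr_deriv (by ring)

/-- If an exponential sum vanishes on a nonempty open set, its coefficients vanish. -/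
lemma expsum_coeffs_zero_of_open (A : Finset (Multiplicative ℝ)) (co : Multiplicative ℝ → ℂ)
    {W : Set ℂ} (hW : IsOpen W) {z₀ : ℂ} (hz₀ : z₀ ∈ W)
    (h : ∀ z ∈ W, ∑ s ∈ A, co s * Complex.exp ((Multiplicative.toAdd s : ℝ) * z) = 0) :
    ∀ s ∈ A, co s = 0 := by
  set f : ℂ → ℂ := fun z => ∑ s ∈ A, co s * Complex.exp ((Multiplicative.toAdd s : ℝ) * z)
    with hf_def
  have hdiff : Differentiable ℂ f := by
    apply Differentiable.fun_sum
    intro s _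
    exact (differentiable_const _).mul ((differentiable_id.const_mul _).cexp)
  have hanal : AnalyticOnNhd ℂ f univ := Complex.analyticOnNhd_univ_iff_differentiable.mpr hdiff
  have hfreq : ∃ᶠ z in 𝓝[≠] z₀, f z = 0 := by
    have hev : ∀ᶠ z in 𝓝 z₀, f z = 0 := by
      filter_upwards [hW.mem_nhds hz₀] with z hz using h z hz
    exact (hev.filter_mono nhdsWithin_le_nhds).frequently
  have := hanal.eqOn_zero_of_preconnected_of_frequently_eq_zero isPreconnected_univ
    (mem_univ z₀) hfreq
  exact expsum_coeffs_zero A co (fun z => this (mem_univ z))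

/-- The value of `Gf` on the one-dimensional slice through the first coordinate. -/
lemma Gf_sing0 {lam : ℂ} (h : ‖lam‖ < 1) :
    Gf (sing 0 lam) = (1 / 2 : ℂ) * phi lam - 1 / 2 := by
  have hcoord : ∀ n, ‖sing 0 lam n‖ ≤ ‖lam‖ := by
    intro n
    by_cases hn : n = 0
    · subst hn; simp
    · simp [sing_apply_ne 0 lam hn]
  have hs : Summable (fun n => (cc n : ℂ) * phi (sing 0 lam n)) := summable_term h hcoord
  rw [Gf, hs.tsum_eq_zero_add]
  have h0 : (cc 0 : ℂ) * phi (sing 0 lam 0) = (1 / 2 : ℂ) * phi lam := by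
    rw [sing_apply_self]
    congr 1
    rw [cc]
    push_cast
    norm_num
  have hrest : ∀ n : ℕ, (cc (n + 1) : ℂ) * phi (sing 0 lam (n + 1))
      = (1 / 2 : ℂ) ^ n * (-(1 / 4)) := by
    intro n
    rw [sing_apply_ne 0 lam (Nat.succ_ne_zero n)]
    have : phi 0 = -1 := by
      rw [phi]
      norm_num
    rw [this, cc]
    push_cast
    ring
  rw [tsum_congr hrest, tsum_mul_right,
    tsum_geometric_of_norm_lt_one (by norm_num : ‖(1 / 2 : ℂ)‖ < 1), h0]
  ring

/-- If `ExpF mu ∘ Gf` vanishes on the unit ball then `mu = 0`. -/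
lemma mu_eq_zero_of_vanishing (mu : MonoidAlgebra ℂ (Multiplicative ℝ))
    (h : ∀ x : E0, ‖x‖ < 1 → ExpF mu (Gf x) = 0) : mu = 0 := by
  classical
  set lam : ℕ → ℂ := fun j => ((1 / (j + 2) : ℝ) : ℂ) with hlam_def
  have hlam_norm : ∀ j, ‖lam j‖ < 1 := by
    intro j
    rw [hlam_def]
    simp only [Complex.norm_real, Real.norm_eq_abs]
    rw [abs_of_pos (by positivity)]
    rw [div_lt_one (by positivity)]
    linarith [Nat.cast_nonneg (α := ℝ) j]
  have hlam_ne : ∀ j, lam j ≠ 0 := by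
    intro j
    rw [hlam_def]
    simp only [ne_eq, Complex.ofReal_eq_zero]
    positivity
  set g : ℂ → ℂ := fun w => (1 / 2 : ℂ) * phi w - 1 / 2 with hg_def
  have hz : ∀ j : ℕ, ExpF mu (g (lam j)) = 0 := by
    intro j
    rw [hg_def]
    simp only
    rw [← Gf_sing0 (hlam_norm j)]
    exact h _ ((norm_sing_le 0 (lam j)).trans_lt (hlam_norm j))
  have hg_ne : ∀ j, g (lam j) ≠ -1 := by
    intro j heq
    have hl1 : lam j + 1 ≠ 0 := phi_denom_ne (hlam_norm j)
    rw [hg_def] at heq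
    simp only at heq
    have h2 : phi (lam j) = -1 := by linear_combination 2 * heq
    rw [phi, div_eq_iff hl1] at h2
    have : lam j = 0 := by linear_combination h2 / 2
    exact hlam_ne j this
  have hg_tendsto : Tendsto (fun j => g (lam j)) atTop (𝓝[≠] (-1 : ℂ)) := by
    apply tendsto_nhdsWithin_of_tendsto_nhds_of_eventually_within
    · have hlam_tendsto : Tendsto lam atTop (𝓝 (0 : ℂ)) := by
        have hreal : Tendsto (fun j : ℕ => (1 / (j + 2) : ℝ)) atTop (𝓝 0) := by
          have := (tendsto_one_div_add_atTop_nhds_zero_nat (𝕜 := ℝ)).comp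
            (tendsto_add_atTop_nat 1)
          apply this.congr
          intro j
          simp only [Function.comp_apply]
          push_cast
          ring_nf
        have h2 : Tendsto (fun j : ℕ => ((1 / (j + 2) : ℝ) : ℂ)) atTop (𝓝 ((0 : ℝ) : ℂ)) :=
          (Complex.continuous_ofReal.tendsto _).comp hreal
        simpa [hlam_def] using h2
      have hphi_cont : ContinuousAt phi 0 := by
        unfold phi
        exact ((continuousAt_id.sub continuousAt_const).div
          (continuousAt_id.add continuousAt_const) (by norm_num))
      have hcont : ContinuousAt g 0 := by
        rw [hg_def]
        exact (continuousAt_const.mul hphi_cont).sub continuousAt_const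
      have := hcont.tendsto.comp hlam_tendsto
      have hg0 : g 0 = -1 := by
        rw [hg_def]
        simp only
        rw [show phi 0 = -1 by rw [phi]; norm_num]
        norm_num
      rw [hg0] at this
      exact this
    · exact Eventually.of_forall (fun j => hg_ne j)
  have hfreq : ∃ᶠ z in 𝓝[≠] (-1 : ℂ), ExpF mu z = 0 :=
    hg_tendsto.frequently (Frequently.of_forall hz)
  have hanal : AnalyticOnNhd ℂ (ExpF mu) univ :=
    Complex.analyticOnNhd_univ_iff_differentiable.mpr (differentiable_ExpF mu)
  have hzero := hanal.eqOn_zero_of_preconnected_of_frequently_eq_zero isPreconnected_univ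
    (mem_univ (-1 : ℂ)) hfreq
  have hco := expsum_coeffs_zero mu.coeff.support mu.coeff (fun z => hzero (mem_univ z))
  ext s
  by_cases hs : s ∈ mu.coeff.support
  · simpa using hco s hs
  · simpa using Finsupp.notMem_support_iff.mp hs

/-! ### The main analytic lemma -/

lemma main_mem (mu : MonoidAlgebra ℂ (Multiplicative ℝ)) (hmu : mu ≠ 0)
    (hpos : ∀ s ∈ mu.coeff.support, 0 < Multiplicative.toAdd s) :
    MemHinf (fun x : E0 => ExpF mu (Gf x)) ∧
      ∀ x ∈ ball (0 : E0) 1, ∃ c : ℂ, ∃ r > (0 : ℝ),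
        ball c r ⊆ clusterSetW (fun x : E0 => ExpF mu (Gf x)) (iotaBidual x) := by
  constructor
  · constructor
    · exact (differentiable_ExpF mu).comp_differentiableOn differentiableOn_Gf
    · refine ⟨∑ s ∈ mu.coeff.support, ‖mu.coeff s‖, ?_⟩
      intro x hx
      simp only [mem_ball, dist_zero_right] at hx
      calc ‖ExpF mu (Gf x)‖
          ≤ ∑ s ∈ mu.coeff.support, ‖mu.coeff s * Complex.exp ((Multiplicative.toAdd s : ℝ) * Gf x)‖ :=
            norm_sum_le _ _
        _ ≤ ∑ s ∈ mu.coeff.support, ‖mu.coeff s‖ := by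
            apply Finset.sum_le_sum
            intro s hs
            rw [norm_mul]
            have hexp : ‖Complex.exp ((Multiplicative.toAdd s : ℝ) * Gf x)‖ ≤ 1 := by
              rw [Complex.norm_exp]
              rw [Real.exp_le_one_iff]
              rw [Complex.re_ofReal_mul]
              exact mul_nonpos_of_nonneg_of_nonpos (hpos s hs).le (Gf_re_nonpos hx)
            calc ‖mu.coeff s‖ * ‖Complex.exp ((Multiplicative.toAdd s : ℝ) * Gf x)‖
                ≤ ‖mu.coeff s‖ * 1 := mul_le_mul_of_nonneg_left hexp (norm_nonneg _)
              _ = ‖mu.coeff s‖ := mul_one _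
  · intro x hx
    simp only [mem_ball, dist_zero_right] at hx
    have hW_open : IsOpen {w : ℂ | w.re < (Gf x).re} :=
      isOpen_lt Complex.continuous_re continuous_const
    obtain ⟨z₀, hz₀W, hD⟩ : ∃ z₀ : ℂ, z₀.re < (Gf x).re ∧
        (∑ s ∈ mu.coeff.support, mu.coeff s * ((Multiplicative.toAdd s : ℝ) *
          Complex.exp ((Multiplicative.toAdd s : ℝ) * z₀))) ≠ 0 := by
      by_contra hcon
      push_neg at hcon
      have hvan := expsum_coeffs_zero_of_open mu.coeff.support
        (fun s => mu.coeff s * ((Multiplicative.toAdd s : ℝ) : ℂ)) hW_open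
        (z₀ := Gf x - 1) ?_ ?_
      · obtain ⟨s, hs⟩ := Finsupp.support_nonempty_iff.mpr (mt MonoidAlgebra.coeff_eq_zero.mp hmu)
        have h1 := hvan s hs
        have h2 : ((Multiplicative.toAdd s : ℝ) : ℂ) ≠ 0 := by
          exact_mod_cast (hpos s hs).ne'
        rcases mul_eq_zero.mp h1 with h | h
        · exact Finsupp.mem_support_iff.mp hs h
        · exact h2 h
      · simp only [mem_setOf_eq, Complex.sub_re, Complex.one_re]
        linarith
      · intro z hz
        have h3 := hcon z hz
        rw [← h3]
        apply Finset.sum_congr rfl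
        intro s _
        ring
    have hstrict := hasStrictDerivAt_ExpF mu z₀
    have hmap := hstrict.map_nhds_eq hD
    have himg : ExpF mu '' {w : ℂ | w.re < (Gf x).re} ∈ 𝓝 (ExpF mu z₀) := by
      rw [← hmap]
      exact image_mem_map (hW_open.mem_nhds hz₀W)
    obtain ⟨r, hr, hball⟩ := Metric.mem_nhds_iff.mp himg
    refine ⟨ExpF mu z₀, r, hr, ?_⟩
    intro p hp
    obtain ⟨w, hwW, hwp⟩ := hball hp
    rw [← hwp]
    exact mem_clusterSetW_comp (ExpF mu) hx hwW

/-! ### The non-unital algebra of positive-frequency exponential sums -/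

/-- The exponential character family as a monoid hom into the function algebra. -/
def Phi : Multiplicative ℝ →* (E0 → ℂ) where
  toFun := fun s x => Complex.exp ((Multiplicative.toAdd s : ℝ) * Gf x)
  map_one' := by
    funext x
    simp
  map_mul' := fun a b => by
    funext x
    simp only [toAdd_mul, Pi.mul_apply]
    rw [← Complex.exp_add]
    push_cast
    ring_nf

@[simp] lemma Phi_apply (s : Multiplicative ℝ) (x : E0) :
    Phi s x = Complex.exp ((Multiplicative.toAdd s : ℝ) * Gf x) := rfl

/-- The algebra hom from the monoid algebra to functions. -/
def Psi : MonoidAlgebra ℂ (Multiplicative ℝ) →ₐ[ℂ] (E0 → ℂ) :=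
  MonoidAlgebra.lift ℂ (E0 → ℂ) (Multiplicative ℝ) Phi

lemma Psi_apply (mu : MonoidAlgebra ℂ (Multiplicative ℝ)) (x : E0) :
    Psi mu x = ExpF mu (Gf x) := by
  rw [Psi, MonoidAlgebra.lift_apply, Finsupp.sum, ExpF, Finset.sum_apply]
  apply Finset.sum_congr rfl
  intro s _
  rw [Pi.smul_apply, smul_eq_mul, Phi_apply]

/-- The set of positive-frequency exponential sums. -/
def Pset : Set (E0 → ℂ) :=
  {f | ∃ mu : MonoidAlgebra ℂ (Multiplicative ℝ),
    (∀ s ∈ mu.coeff.support, 0 < Multiplicative.toAdd s) ∧ f = Psi mu}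

lemma adjoin_subset_Pset {S : Set (E0 → ℂ)} (hS : S ⊆ Pset) :
    (NonUnitalAlgebra.adjoin ℂ S : Set (E0 → ℂ)) ⊆ Pset := by
  intro f hf
  induction hf using NonUnitalAlgebra.adjoin_induction with
  | mem g hg => exact hS hg
  | add a b _ _ ha hb =>
      obtain ⟨mu, hmu, rfl⟩ := ha
      obtain ⟨nu, hnu, rfl⟩ := hb
      refine ⟨mu + nu, ?_, (map_add Psi mu nu).symm⟩
      intro s hs
      rcases Finset.mem_union.mp (Finsupp.support_add hs) with h | h
      · exact hmu s h
      · exact hnu s h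
  | zero => exact ⟨0, by simp, (map_zero Psi).symm⟩
  | mul a b _ _ ha hb =>
      obtain ⟨mu, hmu, rfl⟩ := ha
      obtain ⟨nu, hnu, rfl⟩ := hb
      refine ⟨mu * nu, ?_, (map_mul Psi mu nu).symm⟩
      intro s hs
      have := MonoidAlgebra.support_coeff_mul_subset mu nu hs
      rw [Finset.mem_mul] at this
      obtain ⟨a, ha', b, hb', rfl⟩ := this
      rw [toAdd_mul]
      exact add_pos (hmu a ha') (hnu b hb')
  | smul c a _ ha =>
      obtain ⟨mu, hmu, rfl⟩ := ha
      refine ⟨c • mu, ?_, (map_smul Psi c mu).symm⟩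
      intro s hs
      exact hmu s (Finsupp.support_smul hs)

/-! ### A continuum-sized ℚ-linearly independent set of positive reals -/

lemma exists_T : ∃ T : Set ℝ, (∀ t ∈ T, 0 < t) ∧ Cardinal.mk T = Cardinal.continuum ∧
    LinearIndependent ℚ ((↑) : T → ℝ) := by
  classical
  obtain ⟨s, hs_card, hs_li⟩ := exists_set_linearIndependent ℚ ℝ
  rw [Real.rank_rat_real] at hs_card
  have h0 : ∀ r ∈ s, r ≠ 0 := fun r hr => by
    have := hs_li.ne_zero ⟨r, hr⟩
    simpa using this
  have habs_inj : InjOn (fun r : ℝ => |r|) s := by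
    intro r hr r' hr' h
    by_contra hne
    rcases abs_eq_abs.mp h with h1 | h1
    · exact hne h1
    · have hij : (⟨r, hr⟩ : s) ≠ ⟨r', hr'⟩ := by simpa using hne
      have hrel := linearIndependent_iff'.mp hs_li {⟨r, hr⟩, ⟨r', hr'⟩} (fun _ => 1) ?_
        ⟨r, hr⟩ (by simp)
      · norm_num at hrel
      · rw [Finset.sum_pair hij]
        simp only [one_smul]
        show r + r' = 0
        rw [h1]
        ring
  have habs_li : LinearIndependent ℚ (fun i : s => |(i : ℝ)|) := by
    set w : s → ℚˣ := fun i => if 0 ≤ (i : ℝ) then 1 else -1 with hw_def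
    have hli2 := hs_li.units_smul w
    have heq : (w • (Subtype.val : s → ℝ)) = fun i : s => |(i : ℝ)| := by
      funext i
      rw [Pi.smul_apply', hw_def]
      by_cases hi : 0 ≤ (i : ℝ)
      · simp only [if_pos hi]
        rw [abs_of_nonneg hi]
        norm_num
      · simp only [if_neg hi]
        rw [abs_of_neg (lt_of_not_ge hi)]
        show ((-1 : ℚˣ) : ℚ) • (i : ℝ) = -(i : ℝ)
        push_cast
        norm_num
    rw [heq] at hli2
    exact hli2
  refine ⟨(fun r => |r|) '' s, ?_, ?_, ?_⟩
  · rintro t ⟨r, hr, rfl⟩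
    exact abs_pos.mpr (h0 r hr)
  · rw [Cardinal.mk_image_eq_of_injOn _ _ habs_inj, hs_card]
  · set e := Equiv.Set.imageOfInjOn _ s habs_inj with he_def
    have hli3 := habs_li.comp e.symm e.symm.injective
    have heq2 : ((fun i : s => |(i : ℝ)|) ∘ e.symm)
        = ((↑) : ((fun r : ℝ => |r|) '' s) → ℝ) := by
      funext τ
      have h1 : ((e (e.symm τ)) : ℝ) = (τ : ℝ) := congrArg Subtype.val (e.apply_symm_apply τ)
      have h2 : ((e (e.symm τ)) : ℝ) = |((e.symm τ : s) : ℝ)| := rfl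
      simp only [Function.comp_apply]
      rw [← h2, h1]
    rw [heq2] at hli3
    exact hli3

/-! ### Generators and algebraic independence -/

/-- The generator attached to a positive real `t`. -/
def genF (t : ℝ) : E0 → ℂ := fun x => Complex.exp ((t : ℂ) * Gf x)

lemma Gf_zero : Gf (0 : E0) = -1 := by
  have hs : sing 0 (0 : ℂ) = 0 := by
    ext n
    by_cases h : n = 0 <;> simp [h]
  have h := Gf_sing0 (lam := 0) (by simp)
  rw [hs] at h
  rw [h, show phi 0 = -1 by rw [phi]; norm_num]
  ring

lemma genF_injective : Function.Injective genF := by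
  intro t t' h
  have h1 := congrFun h 0
  rw [genF, genF] at h1
  simp only [Gf_zero] at h1
  have habs := congrArg (fun z : ℂ => ‖z‖) h1
  rw [Complex.norm_exp, Complex.norm_exp] at habs
  have hre : ∀ u : ℝ, ((u : ℂ) * (-1)).re = -u := by
    intro u
    rw [mul_neg_one, Complex.neg_re, Complex.ofReal_re]
  rw [hre, hre] at habs
  have := Real.exp_eq_exp.mp habs
  linarith

/-- The generator set. -/
def GEN (T : Set ℝ) : Set (E0 → ℂ) := genF '' T

section AlgIndep

variable (T : Set ℝ)

/-- The exponent of a generator. -/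
def tOf (g : ↥(GEN T)) : ℝ := (g.2).choose

lemma tOf_mem (g : ↥(GEN T)) : tOf T g ∈ T := (g.2).choose_spec.1

lemma genF_tOf (g : ↥(GEN T)) : genF (tOf T g) = g := (g.2).choose_spec.2

lemma tOf_injective : Function.Injective (tOf T) := fun g g' h =>
  Subtype.ext (by rw [← genF_tOf T g, ← genF_tOf T g', h])

/-- The total frequency of a monomial. -/
def keyS (m : ↥(GEN T) →₀ ℕ) : ℝ := m.sum fun g k => (k : ℝ) * tOf T g

lemma keyS_injective (hTli : LinearIndependent ℚ ((↑) : T → ℝ)) :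
    Function.Injective (keyS T) := by
  intro m m' h
  classical
  set A := m.support ∪ m'.support with hA_def
  have hm : keyS T m = ∑ g ∈ A, (m g : ℝ) * tOf T g :=
    Finsupp.sum_of_support_subset m Finset.subset_union_left _ (fun g _ => by simp)
  have hm' : keyS T m' = ∑ g ∈ A, (m' g : ℝ) * tOf T g :=
    Finsupp.sum_of_support_subset m' Finset.subset_union_right _ (fun g _ => by simp)
  have hli : LinearIndependent ℚ (fun g : ↥(GEN T) => tOf T g) := by
    have hcomp := hTli.comp (fun g : ↥(GEN T) => (⟨tOf T g, tOf_mem T g⟩ : T))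
      (fun g g' hgg => tOf_injective T (congrArg Subtype.val hgg))
    exact hcomp
  have hsum : ∑ g ∈ A, (((m g : ℚ) - (m' g : ℚ))) • (tOf T g) = 0 := by
    have hterm : ∀ g, (((m g : ℚ) - (m' g : ℚ))) • (tOf T g)
        = (m g : ℝ) * tOf T g - (m' g : ℝ) * tOf T g := by
      intro g
      rw [Rat.smul_def]
      push_cast
      ring
    rw [Finset.sum_congr rfl (fun g _ => hterm g), Finset.sum_sub_distrib]
    rw [← hm, ← hm', h]
    ring
  have hzero := linearIndependent_iff'.mp hli A _ hsum
  ext g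
  by_cases hg : g ∈ A
  · have := hzero g hg
    have h2 : (m g : ℚ) = (m' g : ℚ) := by linarith [sub_eq_zero.mp this]
    exact_mod_cast h2
  · rw [hA_def, Finset.mem_union] at hg
    push_neg at hg
    rw [Finsupp.notMem_support_iff.mp hg.1, Finsupp.notMem_support_iff.mp hg.2]

lemma ExpF_zero_fun (z : ℂ) : ExpF 0 z = 0 := by
  rw [ExpF]
  simp

lemma ExpF_single (a : Multiplicative ℝ) (c : ℂ) (z : ℂ) :
    ExpF (MonoidAlgebra.single a c) z = c * Complex.exp ((Multiplicative.toAdd a : ℝ) * z) := by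
  show (Finsupp.single a c).sum (fun s c => c * Complex.exp ((Multiplicative.toAdd s : ℝ) * z))
    = _
  rw [Finsupp.sum_single_index]
  rw [zero_mul]

lemma ExpF_eq_finsuppSum (mu : MonoidAlgebra ℂ (Multiplicative ℝ)) (z : ℂ) :
    ExpF mu z = mu.coeff.sum (fun s c => c * Complex.exp ((Multiplicative.toAdd s : ℝ) * z)) := rfl

lemma ExpF_add (mu nu : MonoidAlgebra ℂ (Multiplicative ℝ)) (z : ℂ) :
    ExpF (mu + nu) z = ExpF mu z + ExpF nu z := by
  rw [ExpF_eq_finsuppSum, ExpF_eq_finsuppSum, ExpF_eq_finsuppSum]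
  apply Finsupp.sum_add_index'
  · intro a
    rw [zero_mul]
  · intro a b₁ b₂
    ring

lemma ExpF_finset_sum {ι : Type*} (A : Finset ι) (f : ι → MonoidAlgebra ℂ (Multiplicative ℝ))
    (z : ℂ) : ExpF (∑ i ∈ A, f i) z = ∑ i ∈ A, ExpF (f i) z := by
  classical
  induction A using Finset.induction_on with
  | empty => simp [ExpF_zero_fun]
  | insert _ _ h ih => rw [Finset.sum_insert h, Finset.sum_insert h, ExpF_add, ih]

/-- The monoid-algebra element attached to a polynomial. -/
def muOf (p : MvPolynomial ↥(GEN T) ℂ) : MonoidAlgebra ℂ (Multiplicative ℝ) :=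
  ∑ m ∈ p.support, MonoidAlgebra.single (Multiplicative.ofAdd (keyS T m)) (p.coeff m)

lemma aeval_apply_pi {σ : Type*} (f : σ → E0 → ℂ) (p : MvPolynomial σ ℂ) (x : E0) :
    MvPolynomial.aeval f p x = MvPolynomial.eval (fun i => f i x) p := by
  induction p using MvPolynomial.induction_on with
  | C a => simp
  | add p q hp hq => simp [map_add, Pi.add_apply, hp, hq]
  | mul_X p g hp => simp [map_mul, Pi.mul_apply, hp]

lemma aeval_eq_ExpF_muOf (p : MvPolynomial ↥(GEN T) ℂ) (x : E0) :
    MvPolynomial.aeval ((↑) : ↥(GEN T) → (E0 → ℂ)) p x = ExpF (muOf T p) (Gf x) := by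
  classical
  rw [aeval_apply_pi, MvPolynomial.eval_eq, muOf, ExpF_finset_sum]
  apply Finset.sum_congr rfl
  intro m hm
  rw [ExpF_single, toAdd_ofAdd]
  congr 1
  have hprod : ∀ g ∈ m.support,
      ((g : E0 → ℂ) x) ^ m g = Complex.exp ((m g : ℝ) * tOf T g * Gf x) := by
    intro g _
    rw [← genF_tOf T g, genF]
    rw [← Complex.exp_nat_mul]
    congr 1
    push_cast
    ring
  rw [Finset.prod_congr rfl hprod, ← Complex.exp_sum]
  congr 1
  rw [keyS, Finsupp.sum]
  push_cast
  rw [Finset.sum_mul]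

lemma muOf_ne_zero (hTli : LinearIndependent ℚ ((↑) : T → ℝ))
    {p : MvPolynomial ↥(GEN T) ℂ} (hp : p ≠ 0) : muOf T p ≠ 0 := by
  classical
  obtain ⟨m₀, hm₀⟩ := (MvPolynomial.support_nonempty.mpr hp)
  intro hcon
  have happ : (muOf T p).coeff (Multiplicative.ofAdd (keyS T m₀)) = 0 := by rw [hcon]; rfl
  rw [muOf, MonoidAlgebra.coeff_sum, Finset.sum_apply'] at happ
  rw [Finset.sum_eq_single m₀] at happ
  · rw [MonoidAlgebra.coeff_single_apply, if_pos rfl] at happ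
    exact MvPolynomial.mem_support_iff.mp hm₀ happ
  · intro m hm hne
    rw [MonoidAlgebra.coeff_single_apply, if_neg]
    intro heq
    exact hne (keyS_injective T hTli (Multiplicative.ofAdd.injective heq))
  · intro h
    exact absurd hm₀ h

lemma algebraicIndependent_GEN (hTli : LinearIndependent ℚ ((↑) : T → ℝ)) :
    AlgebraicIndependent ℂ ((↑) : ↥(GEN T) → (E0 → ℂ)) := by
  rw [AlgebraicIndependent]
  rw [injective_iff_map_eq_zero]
  intro p hp
  by_contra hne
  apply muOf_ne_zero T hTli hne
  apply mu_eq_zero_of_vanishing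
  intro x hx
  rw [← aeval_eq_ExpF_muOf T p x, hp]
  rfl

end AlgIndep

end Stmt5

/-- For `E = c₀` (complex sequences converging to 0, sup norm) with open unit
ball `B`, the set of `f ∈ H^∞(B)` whose cluster set at every `x ∈ B` contains a disk is
strongly 𝔠-algebrable. -/
theorem stmt5 :
    StronglyCAlgebrable {f : ZeroAtInftyContinuousMap ℕ ℂ → ℂ | MemHinf f ∧
      ∀ x ∈ ball (0 : ZeroAtInftyContinuousMap ℕ ℂ) 1,
        ∃ c : ℂ, ∃ r > (0 : ℝ), ball c r ⊆ clusterSetW f (iotaBidual x)} := by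
  classical
  obtain ⟨T, hTpos, hTcard, hTli⟩ := Stmt5.exists_T
  refine ⟨Stmt5.GEN T, ?_, Stmt5.algebraicIndependent_GEN T hTli, ?_⟩
  · rw [Stmt5.GEN, Cardinal.mk_image_eq Stmt5.genF_injective]
    exact hTcard
  · have hsub : Stmt5.GEN T ⊆ Stmt5.Pset := by
      rintro g ⟨t, ht, rfl⟩
      refine ⟨MonoidAlgebra.single (Multiplicative.ofAdd t) 1, ?_, ?_⟩
      · intro s hs
        have h1 := Finsupp.support_single_subset hs
        rw [Finset.mem_singleton] at h1
        subst h1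
        exact hTpos _ ht
      · have h2 : Stmt5.Psi (MonoidAlgebra.single (Multiplicative.ofAdd t) 1)
            = Stmt5.Phi (Multiplicative.ofAdd t) := by
          rw [Stmt5.Psi, MonoidAlgebra.lift_single, one_smul]
        rw [h2]
        funext x
        rw [Stmt5.Phi_apply, toAdd_ofAdd]
        rfl
    intro f hf
    obtain ⟨mu, hmu_pos, rfl⟩ := Stmt5.adjoin_subset_Pset hsub hf
    by_cases h0 : mu = 0
    · apply Set.mem_union_right
      rw [h0, map_zero]
      exact Set.mem_singleton _
    · apply Set.mem_union_left
      have hmm := Stmt5.main_mem mu h0 hmu_pos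
      have heq : Stmt5.Psi mu = fun x => Stmt5.ExpF mu (Stmt5.Gf x) :=
        funext (Stmt5.Psi_apply mu)
      rw [heq]
      exact ⟨hmm.1, hmm.2⟩
end
end

section
/- Let E = (ℂⁿ, ‖·‖) be a finite-dimensional complex normed space with open unit ball B and unit sphere S, and let M ⊆ S. Then F_M(B) = F_{cl(M)}(B), where cl(M) denotes the (norm) closure of M in S. Equivalently, for every f ∈ H^∞(B), the intersection ⋂_{x ∈ M} Cl(f,x) equals ⋂_{x ∈ cl(M)} Cl(f,x). -/
open Metric Set Filter

noncomputable section

variable {E : Type*} [NormedAddCommGroup E] [NormedSpace ℂ E]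

lemma clusterSetSeq_closure_aux {E : Type*} [NormedAddCommGroup E] [NormedSpace ℂ E]
    (f : E → ℂ) (l : ℂ) (M : Set E) (h : ∀ z ∈ M, l ∈ clusterSetSeq f z)
    (z₀ : E) (hz : z₀ ∈ closure M) : l ∈ clusterSetSeq f z₀ := by
  have key : ∀ n : ℕ, ∃ y : E, y ∈ ball (0 : E) 1 ∧
      dist y z₀ < 2 / (n + 1) ∧ dist (f y) l < 1 / (n + 1) := by
    intro n
    have hpos : (0 : ℝ) < 1 / (n + 1) := by positivity
    obtain ⟨z, hzM, hdz⟩ := Metric.mem_closure_iff.mp hz (1 / (n + 1)) hpos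
    obtain ⟨x, hxball, hxz, hfx⟩ := h z hzM
    obtain ⟨K₁, hK₁⟩ := (Metric.tendsto_atTop.mp hxz) (1 / (n + 1)) hpos
    obtain ⟨K₂, hK₂⟩ := (Metric.tendsto_atTop.mp hfx) (1 / (n + 1)) hpos
    refine ⟨x (max K₁ K₂), hxball _, ?_, hK₂ _ (le_max_right _ _)⟩
    calc dist (x (max K₁ K₂)) z₀ ≤ dist (x (max K₁ K₂)) z + dist z z₀ := dist_triangle _ _ _
      _ < 1 / (n + 1) + 1 / (n + 1) := by
          have := hK₁ (max K₁ K₂) (le_max_left _ _)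
          exact add_lt_add this ((dist_comm z z₀) ▸ hdz)
      _ = 2 / (n + 1) := by ring
  choose y hy₁ hy₂ hy₃ using key
  have hto : ∀ (c : ℝ) (g : ℕ → ℝ), (∀ n : ℕ, g n < c / (n + 1)) → (∀ n, 0 ≤ g n) →
      Tendsto g atTop (nhds 0) := by
    intro c g hg hg0
    have : Tendsto (fun n : ℕ => c / (n + 1)) atTop (nhds 0) := by
      have := tendsto_one_div_add_atTop_nhds_zero_nat (𝕜 := ℝ)
      have h2 : Tendsto (fun n : ℕ => c * (1 / (n + 1 : ℝ))) atTop (nhds (c * 0)) :=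
        this.const_mul c
      simpa [div_eq_mul_inv, mul_comm] using h2
    exact squeeze_zero hg0 (fun n => (hg n).le) this
  refine ⟨y, hy₁, ?_, ?_⟩
  · exact tendsto_iff_dist_tendsto_zero.mpr
      (hto 2 _ hy₂ (fun n => dist_nonneg))
  · exact tendsto_iff_dist_tendsto_zero.mpr
      (hto 1 _ hy₃ (fun n => dist_nonneg))

/-- For a finite-dimensional complex normed space `E = (ℂⁿ, ‖·‖)` and
`M ⊆ S`, one has `F_M(B) = F_{cl(M)}(B)`; equivalently, for every `f ∈ H^∞(B)` the
intersection of the cluster sets over `M` equals the intersection over the closure of `M`. -/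
theorem stmt9 (E : Type*) [NormedAddCommGroup E] [NormedSpace ℂ E]
    [FiniteDimensional ℂ E]
    (M : Set E) (hM : ∀ z ∈ M, ‖z‖ = 1) :
    ({f : E → ℂ | MemHinf f ∧
        ∃ r > (0 : ℝ), ∀ z ∈ M, ball (0 : ℂ) r ⊆ clusterSetSeq f z} =
      {f : E → ℂ | MemHinf f ∧
        ∃ r > (0 : ℝ), ∀ z ∈ closure M, ball (0 : ℂ) r ⊆ clusterSetSeq f z}) ∧
    ∀ f : E → ℂ, MemHinf f →
      (⋂ x ∈ M, clusterSetSeq f x) = ⋂ x ∈ closure M, clusterSetSeq f x := by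
  constructor
  · ext f
    simp only [mem_setOf_eq]
    refine and_congr_right fun _ => ?_
    constructor
    · rintro ⟨r, hr, hsub⟩
      refine ⟨r, hr, fun z hz l hl => ?_⟩
      exact clusterSetSeq_closure_aux f l M (fun w hw => hsub w hw hl) z hz
    · rintro ⟨r, hr, hsub⟩
      exact ⟨r, hr, fun z hz => hsub z (subset_closure hz)⟩
  · intro f _
    apply Set.Subset.antisymm
    · intro l hl
      simp only [mem_iInter] at hl ⊢
      intro z hz
      exact clusterSetSeq_closure_aux f l M (fun w hw => hl w hw) z hz
    · exact Set.biInter_mono subset_closure (fun _ _ => le_rfl)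
end
end

section
/- Let E be an infinite-dimensional complex Banach space with open unit ball B, and let M be a subset of the closed unit ball of E**. Then F_M(B) = F_{cl_{w*}(M)}(B), where cl_{w*}(M) denotes the weak-star closure of M in the closed unit ball of E**. Equivalently, for every f ∈ H^∞(B), the intersection ⋂_{x ∈ M} Cl(f,x) equals ⋂_{x ∈ cl_{w*}(M)} Cl(f,x). -/
open Metric Set Filter

noncomputable section

variable {E : Type*} [NormedAddCommGroup E] [NormedSpace ℂ E]

/-- For an infinite-dimensional complex Banach space `E` and a subset `M`
of the closed unit ball of `E**`, one has `F_M(B) = F_{cl_{w*}(M)}(B)`, where `cl_{w*}(M)` is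
the weak-star closure of `M`; equivalently, for every `f ∈ H^∞(B)` the intersection of the
cluster sets over `M` equals the intersection over the weak-star closure of `M`. -/
theorem stmt10 (E : Type*) [NormedAddCommGroup E] [NormedSpace ℂ E] [CompleteSpace E]
    (hinf : ¬ FiniteDimensional ℂ E)
    (M : Set (StrongDual ℂ (StrongDual ℂ E)))
    (hM : ∀ z ∈ M, ‖z‖ ≤ 1)
    (Mw : Set (StrongDual ℂ (StrongDual ℂ E)))
    (hMw : Mw = {z | StrongDual.toWeakDual z ∈
      closure ((fun w : StrongDual ℂ (StrongDual ℂ E) =>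
        StrongDual.toWeakDual w) '' M)}) :
    ({f : E → ℂ | MemHinf f ∧
        ∃ r > (0 : ℝ), ∀ z ∈ M, ball (0 : ℂ) r ⊆ clusterSetW f z} =
      {f : E → ℂ | MemHinf f ∧
        ∃ r > (0 : ℝ), ∀ z ∈ Mw, ball (0 : ℂ) r ⊆ clusterSetW f z}) ∧
    ∀ f : E → ℂ, MemHinf f →
      (⋂ x ∈ M, clusterSetW f x) = ⋂ x ∈ Mw, clusterSetW f x := by
  -- M ⊆ Mw
  have hsub : M ⊆ Mw := by
    intro z hz
    rw [hMw]
    exact subset_closure (X := WeakDual ℂ (StrongDual ℂ E)) ⟨z, hz, rfl⟩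
  -- key: if l ∈ Cl(f,x) for all x ∈ M, then l ∈ Cl(f,z) for z ∈ Mw
  have key : ∀ (f : E → ℂ) (l : ℂ), (∀ x ∈ M, l ∈ clusterSetW f x) →
      ∀ z ∈ Mw, l ∈ clusterSetW f z := by
    intro f l hl z hz U hU hzU
    rw [hMw] at hz
    obtain ⟨y, hyU, x, hxM, hxy⟩ :=
      (_root_.mem_closure_iff (X := WeakDual ℂ (StrongDual ℂ E))).mp hz U hU hzU
    subst hxy
    exact hl x hxM U hU hyU
  constructor
  · ext f
    simp only [mem_setOf_eq]
    constructor
    · rintro ⟨hf, r, hr, h⟩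
      exact ⟨hf, r, hr, fun z hz l hlr => key f l (fun x hx => h x hx hlr) z hz⟩
    · rintro ⟨hf, r, hr, h⟩
      exact ⟨hf, r, hr, fun z hz => h z (hsub hz)⟩
  · intro f _
    apply Subset.antisymm
    · intro l hl
      simp only [mem_iInter] at hl ⊢
      exact fun z hz => key f l hl z hz
    · exact biInter_subset_biInter_left hsub
end
end

section
/- Let E be a uniformly convex complex Banach space with open unit ball B, and let f ∈ H^∞(B). If there exist c ∈ ℂ and r > 0 such that the disk of center c and radius r is contained in Cl(f,z) for every z ∈ B (identified with its canonical image in E**), then f is not uniformly continuous on B; that is, f does not belong to A_u(B). -/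
open Metric Set Filter

noncomputable section

variable {E : Type*} [NormedAddCommGroup E] [NormedSpace ℂ E]

/-- Let `E` be a uniformly convex complex Banach space with open unit ball
`B` and `f ∈ H^∞(B)`. If some disk of center `c` and radius `r > 0` is contained in
`Cl(f, z)` for every `z ∈ B` (viewed in the bidual), then `f` is not uniformly continuous on
`B`, i.e. `f ∉ A_u(B)`. -/
theorem stmt11 (E : Type*) [NormedAddCommGroup E] [NormedSpace ℂ E] [CompleteSpace E]
    [UniformConvexSpace E]
    (f : E → ℂ) (hf : MemHinf f)
    (hdisk : ∃ c : ℂ, ∃ r > (0 : ℝ), ∀ z ∈ ball (0 : E) 1,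
      ball c r ⊆ clusterSetW f (iotaBidual z)) :
    ¬ UniformContinuousOn f (ball (0 : E) 1) := by
  intro hu
  obtain ⟨c, r, hr, hcl⟩ := hdisk
  set p : ℂ := c + ((3 * r / 4 : ℝ) : ℂ) with hp_def
  set q : ℂ := c - ((3 * r / 4 : ℝ) : ℂ) with hq_def
  have hpmem : p ∈ ball c r := by
    simp only [hp_def, mem_ball, dist_eq_norm, add_sub_cancel_left, Complex.norm_real,
      Real.norm_eq_abs]
    rw [abs_of_nonneg (by linarith)]; linarith
  have hqmem : q ∈ ball c r := by
    simp only [hq_def, mem_ball, dist_eq_norm, sub_sub_cancel_left, norm_neg,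
      Complex.norm_real, Real.norm_eq_abs]
    rw [abs_of_nonneg (by linarith)]; linarith
  have hdistpq : dist p q = 3 * r / 2 := by
    rw [dist_eq_norm]
    have : p - q = ((3 * r / 2 : ℝ) : ℂ) := by
      simp only [hp_def, hq_def]; push_cast; ring
    rw [this, Complex.norm_real, Real.norm_eq_abs, abs_of_nonneg (by linarith)]
  rcases subsingleton_or_nontrivial E with hE | hE
  · -- trivial space: the cluster set is a singleton
    have h0 : (0 : E) ∈ ball (0 : E) 1 := by simp
    have key : ∀ l ∈ ball c r, l = f 0 := by
      intro l hl
      have := hcl 0 h0 hl univ isOpen_univ (mem_univ _)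
      have hsub : (f '' ((fun x : E => StrongDual.toWeakDual (iotaBidual x)) ⁻¹' univ
          ∩ ball (0 : E) 1)) ⊆ {f 0} := by
        rintro y ⟨x, -, rfl⟩
        simp [Subsingleton.elim x 0]
      have := closure_mono hsub this
      simpa using this
    have := key p hpmem
    have := key q hqmem
    rw [this] at hdistpq; rw [‹p = f 0›] at hdistpq
    simp at hdistpq; linarith
  · -- nontrivial uniformly convex case
    obtain ⟨e, he⟩ := exists_ne (0 : E)
    set e' : E := ‖e‖⁻¹ • e with he'_def
    have hne : ‖e‖ ≠ 0 := norm_ne_zero_iff.2 he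
    have he1 : ‖e'‖ = 1 := by
      rw [he'_def, norm_smul, norm_inv, norm_norm, inv_mul_cancel₀ hne]
    -- uniform continuity modulus
    rw [Metric.uniformContinuousOn_iff] at hu
    obtain ⟨δ, hδ, hucont⟩ := hu (r / 2) (by linarith)
    -- uniform convexity modulus
    obtain ⟨η, hη, hconv⟩ := exists_forall_closed_ball_dist_add_le_two_sub E hδ
    set θ : ℝ := min (η / 4) (1 / 2) with hθ_def
    have hθpos : 0 < θ := lt_min (by linarith) (by norm_num)
    have hθle : θ ≤ 1 / 2 := min_le_right _ _
    have hθη : θ ≤ η / 4 := min_le_left _ _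
    set z : E := ((1 - θ : ℝ) : ℂ) • e' with hz_def
    have hznorm : ‖z‖ = 1 - θ := by
      rw [hz_def, norm_smul, he1, mul_one, Complex.norm_real, Real.norm_eq_abs,
        abs_of_nonneg (by linarith)]
    have hzmem : z ∈ ball (0 : E) 1 := by
      rw [mem_ball, dist_zero_right, hznorm]; linarith
    obtain ⟨g, hg1, hge⟩ := exists_dual_vector ℂ e' (by
      intro h; rw [h] at he1; simp at he1)
    have hgz : g z = ((1 - θ : ℝ) : ℂ) := by
      rw [hz_def, map_smul, hge, he1]; simp
    -- the weak-star open set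
    set U : Set (WeakDual ℂ (StrongDual ℂ E)) :=
      (fun w : WeakDual ℂ (StrongDual ℂ E) => w g) ⁻¹' (ball ((1 - θ : ℝ) : ℂ) (η / 4))
      with hU_def
    have hUopen : IsOpen U := (WeakDual.eval_continuous g).isOpen_preimage _ isOpen_ball
    have hUmem : StrongDual.toWeakDual (iotaBidual z) ∈ U := by
      have : StrongDual.toWeakDual (iotaBidual z) g = g z := rfl
      simp only [hU_def, mem_preimage, this, hgz, mem_ball, dist_self]
      linarith
    -- every point of the slice is δ-close to z
    have hclose : ∀ x ∈ (fun x : E => StrongDual.toWeakDual (iotaBidual x)) ⁻¹' U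
        ∩ ball (0 : E) 1, dist (f x) (f z) < r / 2 := by
      rintro x ⟨hxU, hxB⟩
      have hxg : ‖g x - ((1 - θ : ℝ) : ℂ)‖ < η / 4 := by
        have : StrongDual.toWeakDual (iotaBidual x) g = g x := rfl
        simpa [hU_def, mem_ball, dist_eq_norm, this] using hxU
      have hxn : ‖x‖ ≤ 1 := le_of_lt (by simpa [dist_zero_right] using hxB)
      have hzn : ‖z‖ ≤ 1 := by rw [hznorm]; linarith
      have hsum : 2 - η < ‖x + z‖ := by
        have h1 : ‖g (x + z)‖ ≤ ‖x + z‖ := by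
          calc ‖g (x + z)‖ ≤ ‖g‖ * ‖x + z‖ := g.le_opNorm _
            _ = ‖x + z‖ := by rw [hg1, one_mul]
        have h2 : g (x + z) = ((2 * (1 - θ) : ℝ) : ℂ) + (g x - ((1 - θ : ℝ) : ℂ)) := by
          rw [map_add, hgz]; push_cast; ring
        have h3 : ‖((2 * (1 - θ) : ℝ) : ℂ)‖ ≤ ‖g (x + z)‖ + ‖g x - ((1 - θ : ℝ) : ℂ)‖ := by
          have h5 : ((2 * (1 - θ) : ℝ) : ℂ) = g (x + z) - (g x - ((1 - θ : ℝ) : ℂ)) := by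
            rw [h2]; ring
          rw [h5]; exact norm_sub_le _ _
        have h4 : ‖((2 * (1 - θ) : ℝ) : ℂ)‖ = 2 * (1 - θ) := by
          rw [Complex.norm_real, Real.norm_eq_abs, abs_of_nonneg (by linarith)]
        rw [h4] at h3
        linarith
      have hxz : ‖x - z‖ < δ := by
        by_contra hcon
        push_neg at hcon
        have := hconv hxn hzn hcon
        linarith
      exact hucont x hxB z hzmem (by rwa [dist_eq_norm])
    -- hence the closure of the slice image is in a small closed ball
    have himg : f '' ((fun x : E => StrongDual.toWeakDual (iotaBidual x)) ⁻¹' U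
        ∩ ball (0 : E) 1) ⊆ closedBall (f z) (r / 2) := by
      rintro y ⟨x, hx, rfl⟩
      exact le_of_lt (hclose x hx)
    have hclosure : closure (f '' ((fun x : E => StrongDual.toWeakDual (iotaBidual x)) ⁻¹' U
        ∩ ball (0 : E) 1)) ⊆ closedBall (f z) (r / 2) :=
      closure_minimal himg isClosed_closedBall
    have hpz : dist p (f z) ≤ r / 2 := hclosure (hcl z hzmem hpmem U hUopen hUmem)
    have hqz : dist q (f z) ≤ r / 2 := hclosure (hcl z hzmem hqmem U hUopen hUmem)
    have : dist p q ≤ r := by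
      calc dist p q ≤ dist p (f z) + dist (f z) q := dist_triangle _ _ _
        _ ≤ r / 2 + r / 2 := by rw [dist_comm (f z) q]; linarith
        _ = r := by ring
    rw [hdistpq] at this; linarith
end
end

section
/- Let E = ℓ_1 (complex) with open unit ball B, and let f ∈ H^∞(B). If there exist c ∈ ℂ and r > 0 such that the disk of center c and radius r is contained in Cl(f,z) for every z ∈ B (identified with its canonical image in E**), then f is not uniformly continuous on B; that is, f does not belong to A_u(B). -/
open Metric Set Filter

noncomputable section

variable {E : Type*} [NormedAddCommGroup E] [NormedSpace ℂ E]

/-- Evaluation of the zeroth coordinate, as a continuous linear functional on `ℓ₁`. -/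
def coord0 : StrongDual ℂ (lp (fun _ : ℕ => ℂ) 1) :=
  LinearMap.mkContinuous
    { toFun := fun x => x 0
      map_add' := fun x y => by simp
      map_smul' := fun c x => by simp }
    1 (fun x => by change ‖(x : ℕ → ℂ) 0‖ ≤ 1 * ‖x‖; simpa using lp.norm_apply_le_norm one_ne_zero x 0)

lemma l1_summable (x : lp (fun _ : ℕ => ℂ) 1) : Summable fun i => ‖x i‖ := by
  have := (lp.memℓp x).summable (p := 1) (by norm_num)
  simpa using this

lemma l1_norm (x : lp (fun _ : ℕ => ℂ) 1) : ‖x‖ = ∑' i, ‖x i‖ := by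
  have := lp.norm_eq_tsum_rpow (p := 1) (by norm_num) x
  simpa using this

lemma l1_split (x : lp (fun _ : ℕ => ℂ) 1) :
    ‖x‖ = ‖x 0‖ + ∑' i, if i = 0 then 0 else ‖x i‖ := by
  rw [l1_norm]
  exact Summable.tsum_eq_add_tsum_ite (l1_summable x) 0

lemma l1_key (x : lp (fun _ : ℕ => ℂ) 1) (a : ℂ) :
    ‖x - lp.single 1 0 a‖ = ‖x 0 - a‖ + (‖x‖ - ‖x 0‖) := by
  have h1 := l1_split (x - lp.single 1 0 a)
  have h2 := l1_split x
  have hc : ∀ i : ℕ, (if i = 0 then 0 else ‖(x - lp.single 1 0 a : lp (fun _ : ℕ => ℂ) 1) i‖)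
      = (if i = 0 then 0 else ‖x i‖) := by
    intro i
    by_cases hi : i = 0
    · simp [hi]
    · simp [hi, lp.coeFn_sub, lp.single_apply_ne (E := fun _ : ℕ => ℂ) 1 0 a hi]
  rw [tsum_congr hc] at h1
  have h0 : (x - lp.single 1 0 a : lp (fun _ : ℕ => ℂ) 1) 0 = x 0 - a := by
    simp [lp.coeFn_sub, lp.single_apply_self]
  rw [h0] at h1
  linarith [h1, h2]

/-- Let `E = ℓ₁` (complex) with open unit ball `B` and `f ∈ H^∞(B)`. If
some disk of center `c` and radius `r > 0` is contained in `Cl(f, z)` for every `z ∈ B`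
(viewed in the bidual), then `f` is not uniformly continuous on `B`, i.e. `f ∉ A_u(B)`. -/
theorem stmt12
    (f : lp (fun _ : ℕ => ℂ) 1 → ℂ) (hf : MemHinf f)
    (hdisk : ∃ c : ℂ, ∃ r > (0 : ℝ), ∀ z ∈ ball (0 : lp (fun _ : ℕ => ℂ) 1) 1,
      ball c r ⊆ clusterSetW f (iotaBidual z)) :
    ¬ UniformContinuousOn f (ball (0 : lp (fun _ : ℕ => ℂ) 1) 1) := by
  obtain ⟨c, r, hr, hcl⟩ := hdisk
  intro hu
  obtain ⟨δ, hδ, hδu⟩ := (Metric.uniformContinuousOn_iff).1 hu (r / 2) (by positivity)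
  set δ' : ℝ := min δ 1 with hδ'def
  have hδ'pos : 0 < δ' := lt_min hδ one_pos
  have hδ'le : δ' ≤ 1 := min_le_right _ _
  have hδ'δ : δ' ≤ δ := min_le_left _ _
  set a : ℝ := 1 - δ' / 4 with ha
  have ha0 : 0 < a := by simp only [ha]; linarith
  have ha1 : a < 1 := by simp only [ha]; linarith
  set z : lp (fun _ : ℕ => ℂ) 1 := lp.single 1 0 (a : ℂ) with hzdef
  have hznorm : ‖z‖ = a := by
    have := lp.norm_single (p := 1) (E := fun _ : ℕ => ℂ) (by norm_num) 0 (a : ℂ)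
    simpa [hzdef, Complex.norm_real, abs_of_pos ha0] using this
  have hzB : z ∈ ball (0 : lp (fun _ : ℕ => ℂ) 1) 1 := by
    simp [mem_ball, dist_zero_right, hznorm, ha1]
  have hz0 : (z : ∀ _ : ℕ, ℂ) 0 = (a : ℂ) := by
    rw [hzdef]; exact lp.single_apply_self (E := fun _ : ℕ => ℂ) 1 0 (a : ℂ)
  set U : Set (WeakDual ℂ (StrongDual ℂ (lp (fun _ : ℕ => ℂ) 1))) :=
    (fun ψ : WeakDual ℂ (StrongDual ℂ (lp (fun _ : ℕ => ℂ) 1)) => ψ coord0) ⁻¹'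
      (ball ((a : ℝ) : ℂ) (δ' / 8)) with hUdef
  have hUopen : IsOpen U := isOpen_ball.preimage (WeakDual.eval_continuous coord0)
  have hev : ∀ x : lp (fun _ : ℕ => ℂ) 1,
      (StrongDual.toWeakDual (iotaBidual x)) coord0 = x 0 := fun x => rfl
  have hzU : StrongDual.toWeakDual (iotaBidual z) ∈ U := by
    simp only [hUdef, mem_preimage, hev, hz0, mem_ball, dist_self]
    positivity
  -- images of points of the preimage are `r/2`-close to `f z`
  have hsmall : ∀ x ∈ (fun x : lp (fun _ : ℕ => ℂ) 1 =>
      StrongDual.toWeakDual (iotaBidual x)) ⁻¹' U ∩ ball (0 : lp (fun _ : ℕ => ℂ) 1) 1,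
      dist (f x) (f z) < r / 2 := by
    rintro x ⟨hxU, hxB⟩
    refine hδu x hxB z hzB ?_
    have hx0 : dist ((x : ∀ _ : ℕ, ℂ) 0) ((a : ℝ) : ℂ) < δ' / 8 := by
      have := hxU
      simpa only [hUdef, mem_preimage, hev, mem_ball] using this
    have hxnorm : ‖x‖ < 1 := by simpa [mem_ball, dist_zero_right] using hxB
    have hdist : dist x z = ‖x 0 - (a : ℂ)‖ + (‖x‖ - ‖x 0‖) := by
      rw [dist_eq_norm, hzdef, l1_key]
    have hxa : ‖x 0 - (a : ℂ)‖ < δ' / 8 := by rwa [dist_eq_norm] at hx0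
    have hx0big : a - δ' / 8 < ‖x 0‖ := by
      have h1 : ‖((a : ℝ) : ℂ)‖ - ‖x 0‖ ≤ ‖((a : ℝ) : ℂ) - x 0‖ := norm_sub_norm_le _ _
      rw [norm_sub_rev] at h1
      have h2 : ‖((a : ℝ) : ℂ)‖ = a := by
        rw [Complex.norm_real, Real.norm_eq_abs, abs_of_pos ha0]
      rw [h2] at h1
      clear_value a δ'
      linarith
    have : dist x z < δ' / 8 + (1 - (a - δ' / 8)) := by
      rw [hdist]; gcongr <;> linarith
    calc dist x z < δ' / 8 + (1 - (a - δ' / 8)) := this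
      _ = δ' / 2 := by simp only [ha]; ring
      _ ≤ δ := by linarith
  have himg : closure (f '' ((fun x : lp (fun _ : ℕ => ℂ) 1 =>
      StrongDual.toWeakDual (iotaBidual x)) ⁻¹' U ∩ ball (0 : lp (fun _ : ℕ => ℂ) 1) 1))
      ⊆ closedBall (f z) (r / 2) := by
    refine closure_minimal ?_ isClosed_closedBall
    rintro w ⟨x, hx, rfl⟩
    exact mem_closedBall.2 (le_of_lt (hsmall x hx))
  have h1 : (c + ((3 * r / 4 : ℝ) : ℂ)) ∈ clusterSetW f (iotaBidual z) := by
    refine hcl z hzB ?_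
    simp only [mem_ball, dist_self_add_left, Complex.norm_real, Real.norm_eq_abs]
    rw [abs_of_pos (by positivity)]; linarith
  have h2 : (c - ((3 * r / 4 : ℝ) : ℂ)) ∈ clusterSetW f (iotaBidual z) := by
    refine hcl z hzB ?_
    simp only [mem_ball]
    rw [dist_eq_norm]
    have : c - ((3 * r / 4 : ℝ) : ℂ) - c = -((3 * r / 4 : ℝ) : ℂ) := by ring
    rw [this, norm_neg, Complex.norm_real, Real.norm_eq_abs, abs_of_pos (by positivity)]
    linarith
  have d1 : dist (c + ((3 * r / 4 : ℝ) : ℂ)) (f z) ≤ r / 2 :=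
    mem_closedBall.1 (himg (h1 U hUopen hzU))
  have d2 : dist (c - ((3 * r / 4 : ℝ) : ℂ)) (f z) ≤ r / 2 :=
    mem_closedBall.1 (himg (h2 U hUopen hzU))
  have dd : dist (c + ((3 * r / 4 : ℝ) : ℂ)) (c - ((3 * r / 4 : ℝ) : ℂ)) = 3 * r / 2 := by
    rw [dist_eq_norm]
    have : c + ((3 * r / 4 : ℝ) : ℂ) - (c - ((3 * r / 4 : ℝ) : ℂ))
        = ((3 * r / 2 : ℝ) : ℂ) := by push_cast; ring
    rw [this, Complex.norm_real, Real.norm_eq_abs, abs_of_pos (by positivity)]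
  have := dist_triangle (c + ((3 * r / 4 : ℝ) : ℂ)) (f z) (c - ((3 * r / 4 : ℝ) : ℂ))
  rw [dd, dist_comm (f z)] at this
  linarith
end
end

section
/- Let E = ℓ_1 (complex) with open unit ball B, and let m be an even positive integer. Then there exists a linear isometry T from ℓ_∞ into the space of continuous m-homogeneous polynomials on ℓ_1 (with the supremum norm over B) such that for every β ∈ ℓ_∞ with β ≠ 0 and every x ∈ B, the cluster set Cl(Tβ, x) contains a disk of positive radius. In particular, the set of continuous m-homogeneous polynomials on ℓ_1 whose cluster set at every point of B contains a disk contains, up to the zero function, an isometric copy of ℓ_∞. -/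
open Metric Set Filter
open scoped ENNReal NNReal

noncomputable section

variable {E : Type*} [NormedAddCommGroup E] [NormedSpace ℂ E]

section Stmt14Aux

open scoped Topology


lemma weakdual_basic {F : Type*} [NormedAddCommGroup F] [NormedSpace ℂ F]
    (U : Set (WeakDual ℂ (StrongDual ℂ F))) (hU : IsOpen U)
    (z : WeakDual ℂ (StrongDual ℂ F)) (hz : z ∈ U) :
    ∃ (s : Finset (StrongDual ℂ F)) (ε : ℝ), 0 < ε ∧
      ∀ w : WeakDual ℂ (StrongDual ℂ F),
        (∀ φ ∈ s, ‖w φ - z φ‖ < ε) → w ∈ U := by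
  classical
  obtain ⟨V, hVopen, hVeq⟩ := isOpen_induced_iff.mp hU
  have hzV : (fun φ => z φ) ∈ V := by
    rw [← hVeq] at hz; exact hz
  obtain ⟨I, u, hu, hsub⟩ := isOpen_pi_iff.mp hVopen _ hzV
  have hball : ∀ φ ∈ I, ∃ ε > 0, Metric.ball (z φ) ε ⊆ u φ := fun φ hφ =>
    Metric.isOpen_iff.mp (hu φ hφ).1 _ (hu φ hφ).2
  choose ep hpos hsubb using hball
  rcases I.eq_empty_or_nonempty with h | h
  · refine ⟨I, 1, one_pos, fun w _ => ?_⟩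
    rw [← hVeq]
    apply hsub
    intro φ hφ
    rw [h] at hφ
    simp at hφ
  · set F2 : StrongDual ℂ F → ℝ := fun φ => if hh : φ ∈ I then ep φ hh else 1 with hF2
    refine ⟨I, I.inf' h F2, ?_, ?_⟩
    · rw [Finset.lt_inf'_iff]
      intro φ hφ
      simp only [hF2, dif_pos hφ]
      exact hpos φ hφ
    · intro w hw
      rw [← hVeq]
      apply hsub
      intro φ hφ
      rw [Finset.mem_coe] at hφ
      apply hsubb φ hφ
      rw [Metric.mem_ball, dist_eq_norm]
      refine lt_of_lt_of_le (hw φ hφ) ?_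
      refine le_trans (Finset.inf'_le _ hφ) ?_
      simp [hF2, dif_pos hφ]


abbrev L1 := lp (fun _ : ℕ => ℂ) 1
abbrev Linf := lp (fun _ : ℕ => ℂ) ⊤

lemma l1_summable_s14 (x : L1) : Summable (fun j => ‖x j‖) := by
  have := lp.memℓp x
  rw [memℓp_gen_iff (by norm_num : 0 < (1:ℝ≥0∞).toReal)] at this
  simpa using this

lemma l1_norm_s14 (x : L1) : ‖x‖ = ∑' j, ‖x j‖ := by
  rw [lp.norm_eq_tsum_rpow (by norm_num) x]
  simp

lemma l1_coord_le (x : L1) (j : ℕ) : ‖x j‖ ≤ ‖x‖ :=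
  lp.norm_apply_le_norm one_ne_zero x j

lemma linf_coord_le (β : Linf) (n : ℕ) : ‖β n‖ ≤ ‖β‖ :=
  lp.norm_apply_le_norm ENNReal.top_ne_zero β n

def coeff (β : Linf) (j : ℕ) : ℂ := β (Nat.unpair j).1

lemma coeff_le (β : Linf) (j : ℕ) : ‖coeff β j‖ ≤ ‖β‖ := linf_coord_le β _

lemma summable_main {m : ℕ} (hm0 : 0 < m) (β : Linf) (v : Fin m → L1) :
    Summable (fun j => coeff β j * ∏ i, v i j) := by
  have i0 : Fin m := ⟨0, hm0⟩
  apply Summable.of_norm_bounded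
    (g := fun j => (‖β‖ * ∏ i ∈ Finset.univ.erase i0, ‖v i‖) * ‖v i0 j‖)
  · exact ((l1_summable_s14 (v i0)).mul_left _)
  · intro j
    rw [norm_mul, norm_prod]
    calc ‖coeff β j‖ * ∏ i, ‖v i j‖
        ≤ ‖β‖ * ∏ i, ‖v i j‖ := by
          apply mul_le_mul_of_nonneg_right (coeff_le β j)
          exact Finset.prod_nonneg (fun i _ => norm_nonneg _)
      _ = ‖β‖ * (‖v i0 j‖ * ∏ i ∈ Finset.univ.erase i0, ‖v i j‖) := by
          rw [← Finset.mul_prod_erase Finset.univ _ (Finset.mem_univ i0)]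
      _ ≤ ‖β‖ * (‖v i0 j‖ * ∏ i ∈ Finset.univ.erase i0, ‖v i‖) := by
          apply mul_le_mul_of_nonneg_left _ (norm_nonneg _)
          apply mul_le_mul_of_nonneg_left _ (norm_nonneg _)
          exact Finset.prod_le_prod (fun i _ => norm_nonneg _) (fun i _ => l1_coord_le _ _)
      _ = (‖β‖ * ∏ i ∈ Finset.univ.erase i0, ‖v i‖) * ‖v i0 j‖ := by ring

lemma summable_pow {m : ℕ} (hm0 : 0 < m) (β : Linf) (x : L1) :
    Summable (fun j => coeff β j * (x j) ^ m) := by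
  have := summable_main hm0 β (fun _ => x)
  simpa [Finset.prod_const, Finset.card_univ] using this

def Tfun (m : ℕ) (β : Linf) (x : L1) : ℂ := ∑' j, coeff β j * (x j) ^ m

lemma norm_Tfun_le {m : ℕ} (hm0 : 0 < m) (β : Linf) (x : L1) :
    ‖Tfun m β x‖ ≤ ‖β‖ * ‖x‖ ^ m := by
  refine le_trans (norm_tsum_le_tsum_norm (summable_pow hm0 β x).norm) ?_
  calc ∑' j, ‖coeff β j * (x j) ^ m‖
        ≤ ∑' j, ‖β‖ * (‖x‖^(m-1) * ‖x j‖) := by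
          refine Summable.tsum_le_tsum (fun j => ?_) ?_ (((l1_summable_s14 x).mul_left _).mul_left _)
          · rw [norm_mul, norm_pow]
            have h1 : ‖x j‖ ^ m ≤ ‖x‖^(m-1) * ‖x j‖ := by
              calc ‖x j‖ ^ m = ‖x j‖^(m-1) * ‖x j‖ := by
                    rw [← pow_succ, Nat.sub_add_cancel hm0]
                _ ≤ ‖x‖^(m-1) * ‖x j‖ := by
                    apply mul_le_mul_of_nonneg_right _ (norm_nonneg _)
                    exact pow_le_pow_left₀ (norm_nonneg _) (l1_coord_le x j) _
            exact mul_le_mul (coeff_le β j) h1 (by positivity) (norm_nonneg _)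
          · exact (summable_pow hm0 β x).norm
      _ = ‖β‖ * ‖x‖^(m-1) * ∑' j, ‖x j‖ := by rw [← tsum_mul_left]; ring_nf
      _ = ‖β‖ * ‖x‖^(m-1) * ‖x‖ := by rw [l1_norm_s14]
      _ = ‖β‖ * ‖x‖ ^ m := by rw [mul_assoc, ← pow_succ, Nat.sub_add_cancel hm0]


lemma prod_update_apply {m : ℕ} [DecidableEq (Fin m)] (v : Fin m → L1) (i : Fin m) (w : L1) (j : ℕ) :
    ∏ i', (Function.update v i w) i' j = (w j) * ∏ i' ∈ Finset.univ.erase i, v i' j := by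
  have h : ∀ i', (Function.update v i w) i' j
      = Function.update (fun i'' => v i'' j) i (w j) i' := by
    intro i'
    by_cases h : i' = i
    · subst h; simp
    · simp [Function.update_of_ne h]
  simp_rw [h]
  rw [Finset.prod_update_of_mem (Finset.mem_univ i)]
  rw [Finset.sdiff_singleton_eq_erase]

def polyA {m : ℕ} (hm0 : 0 < m) (β : Linf) :
    ContinuousMultilinearMap ℂ (fun _ : Fin m => L1) ℂ :=
  MultilinearMap.mkContinuous
    { toFun := fun v => ∑' j, coeff β j * ∏ i, v i j
      map_update_add' := by
        intro _ v i a b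
        simp only
        have key : ∀ j, coeff β j * ∏ i', (Function.update v i (a + b)) i' j
            = coeff β j * ∏ i', (Function.update v i a) i' j
              + coeff β j * ∏ i', (Function.update v i b) i' j := by
          intro j
          rw [prod_update_apply, prod_update_apply, prod_update_apply]
          have : (↑(a + b) : ℕ → ℂ) j = a j + b j := by
            rw [lp.coeFn_add]; rfl
          rw [this]; ring
        simp_rw [key]
        exact Summable.tsum_add (summable_main hm0 β _) (summable_main hm0 β _)
      map_update_smul' := by
        intro _ v i c a
        simp only
        have key : ∀ j, coeff β j * ∏ i', (Function.update v i (c • a)) i' j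
            = c * (coeff β j * ∏ i', (Function.update v i a) i' j) := by
          intro j
          rw [prod_update_apply, prod_update_apply]
          have : (↑(c • a) : ℕ → ℂ) j = c * a j := by
            rw [lp.coeFn_smul]; rfl
          rw [this]; ring
        simp_rw [key]
        exact tsum_mul_left }
    ‖β‖
    (by
      intro v
      simp only [MultilinearMap.coe_mk]
      refine le_trans (norm_tsum_le_tsum_norm (summable_main hm0 β v).norm) ?_
      have i0 : Fin m := ⟨0, hm0⟩
      calc ∑' j, ‖coeff β j * ∏ i, v i j‖
          ≤ ∑' j, (‖β‖ * ∏ i ∈ Finset.univ.erase i0, ‖v i‖) * ‖v i0 j‖ := by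
            refine Summable.tsum_le_tsum (fun j => ?_) (summable_main hm0 β v).norm
              ((l1_summable_s14 (v i0)).mul_left _)
            rw [norm_mul, norm_prod]
            calc ‖coeff β j‖ * ∏ i, ‖v i j‖
                ≤ ‖β‖ * ∏ i, ‖v i j‖ := by
                  apply mul_le_mul_of_nonneg_right (coeff_le β j)
                  exact Finset.prod_nonneg (fun i _ => norm_nonneg _)
              _ = ‖β‖ * (‖v i0 j‖ * ∏ i ∈ Finset.univ.erase i0, ‖v i j‖) := by
                  rw [← Finset.mul_prod_erase Finset.univ _ (Finset.mem_univ i0)]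
              _ ≤ ‖β‖ * (‖v i0 j‖ * ∏ i ∈ Finset.univ.erase i0, ‖v i‖) := by
                  apply mul_le_mul_of_nonneg_left _ (norm_nonneg _)
                  apply mul_le_mul_of_nonneg_left _ (norm_nonneg _)
                  exact Finset.prod_le_prod (fun i _ => norm_nonneg _)
                    (fun i _ => l1_coord_le _ _)
              _ = (‖β‖ * ∏ i ∈ Finset.univ.erase i0, ‖v i‖) * ‖v i0 j‖ := by ring
        _ = (‖β‖ * ∏ i ∈ Finset.univ.erase i0, ‖v i‖) * ∑' j, ‖v i0 j‖ := by
            rw [tsum_mul_left]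
        _ = ‖β‖ * (‖v i0‖ * ∏ i ∈ Finset.univ.erase i0, ‖v i‖) := by
            rw [← l1_norm_s14]; ring
        _ = ‖β‖ * ∏ i, ‖v i‖ := by
            rw [← Finset.mul_prod_erase Finset.univ _ (Finset.mem_univ i0)])

lemma polyA_diag {m : ℕ} (hm0 : 0 < m) (β : Linf) (x : L1) :
    polyA hm0 β (fun _ => x) = Tfun m β x := by
  rw [polyA, MultilinearMap.coe_mkContinuous]
  simp only [MultilinearMap.coe_mk, Tfun]
  congr 1
  funext j
  rw [Finset.prod_const, Finset.card_univ, Fintype.card_fin]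


lemma Tfun_add (m : ℕ) (hm0 : 0 < m) (β γ : Linf) (x : L1) :
    Tfun m (β + γ) x = Tfun m β x + Tfun m γ x := by
  unfold Tfun
  rw [← Summable.tsum_add (summable_pow hm0 β x) (summable_pow hm0 γ x)]
  congr 1
  funext j
  have : coeff (β + γ) j = coeff β j + coeff γ j := by
    unfold coeff; rw [lp.coeFn_add]; rfl
  rw [this]; ring

lemma Tfun_smul (m : ℕ) (c : ℂ) (β : Linf) (x : L1) :
    Tfun m (c • β) x = c * Tfun m β x := by
  unfold Tfun
  rw [← tsum_mul_left]
  congr 1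
  funext j
  have : coeff (c • β) j = c * coeff β j := by
    unfold coeff; rw [lp.coeFn_smul]; rfl
  rw [this]; ring

lemma single_norm (j₀ : ℕ) (a : ℂ) : ‖(lp.single 1 j₀ a : L1)‖ = ‖a‖ := by
  exact lp.norm_single (E := fun _ : ℕ => ℂ) (p := 1) (by norm_num) j₀ a

lemma single_coord (j₀ j : ℕ) (a : ℂ) : (lp.single 1 j₀ a : L1) j = if j = j₀ then a else 0 := by
  by_cases h : j = j₀
  · subst h; simp [lp.single_apply_self]
  · simp [lp.single_apply_ne _ _ _ h, h]

lemma Tfun_single (m : ℕ) (hm0 : 0 < m) (β : Linf) (j₀ : ℕ) (a : ℂ) :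
    Tfun m β (lp.single 1 j₀ a) = coeff β j₀ * a ^ m := by
  unfold Tfun
  rw [tsum_eq_single j₀]
  · rw [single_coord]; simp
  · intro j hj
    rw [single_coord, if_neg hj, zero_pow hm0.ne', mul_zero]

lemma linf_norm (β : Linf) : ‖β‖ = ⨆ n, ‖β n‖ := lp.norm_eq_ciSup β

lemma sSup_eq (m : ℕ) (hm0 : 0 < m) (β : Linf) :
    sSup ((fun x => ‖Tfun m β x‖) '' ball (0 : L1) 1) = ‖β‖ := by
  have hne : ((fun x => ‖Tfun m β x‖) '' ball (0 : L1) 1).Nonempty :=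
    (Set.Nonempty.image _ ⟨0, by simp⟩)
  apply IsLUB.csSup_eq _ hne
  constructor
  · rintro y ⟨x, hx, rfl⟩
    rw [mem_ball, dist_zero_right] at hx
    refine le_trans (norm_Tfun_le hm0 β x) ?_
    calc ‖β‖ * ‖x‖ ^ m ≤ ‖β‖ * 1 :=
          mul_le_mul_of_nonneg_left
            (pow_le_one₀ (norm_nonneg x) (le_of_lt hx)) (norm_nonneg β)
      _ = ‖β‖ := mul_one _
  · intro b hb
    rw [linf_norm]
    have hb0 : 0 ≤ b := by
      refine le_trans ?_ (hb ⟨0, by simp, rfl⟩)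
      positivity
    apply ciSup_le
    intro n
    have key : ∀ t : ℝ, 0 ≤ t → t < 1 → ‖β n‖ * t ^ m ≤ b := by
      intro t ht0 ht1
      have hx : (lp.single 1 (Nat.pair n 0) (t : ℂ) : L1) ∈ ball (0 : L1) 1 := by
        rw [mem_ball, dist_zero_right, single_norm, Complex.norm_real, Real.norm_of_nonneg ht0]
        exact ht1
      have := hb ⟨_, hx, rfl⟩
      simp only [Tfun_single m hm0 β] at this
      unfold coeff at this
      rw [Nat.unpair_pair] at this
      simpa [norm_mul, norm_pow, Complex.norm_real, Real.norm_of_nonneg ht0, abs_of_nonneg ht0] using this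
    have htend : Tendsto (fun t : ℝ => ‖β n‖ * t ^ m) (𝓝[<] (1:ℝ)) (𝓝 (‖β n‖ * 1 ^ m)) := by
      apply Tendsto.mono_left _ nhdsWithin_le_nhds
      exact (Continuous.tendsto (by continuity) 1)
    rw [one_pow, mul_one] at htend
    refine le_of_tendsto htend ?_
    filter_upwards [Ico_mem_nhdsLT one_pos] with t ht
    exact key t ht.1 ht.2


lemma exists_conv_subseq {A : Type*} (I : Finset A) (g : A → ℕ → ℂ) (C : A → ℝ) :
    (∀ φ ∈ I, ∀ k, ‖g φ k‖ ≤ C φ) →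
    ∃ σ : ℕ → ℕ, StrictMono σ ∧
      ∀ φ ∈ I, ∃ c : ℂ, Tendsto (fun k => g φ (σ k)) atTop (𝓝 c) := by
  classical
  induction I using Finset.induction_on with
  | empty => exact fun _ => ⟨id, strictMono_id, by simp⟩
  | @insert φ₀ I hmem ih =>
    intro hg
    obtain ⟨σ, hσ, hconv⟩ := ih (fun φ hφ k => hg φ (Finset.mem_insert_of_mem hφ) k)
    have hb : ∀ k, g φ₀ (σ k) ∈ Metric.closedBall (0:ℂ) (C φ₀) := fun k => by
      rw [Metric.mem_closedBall, dist_zero_right]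
      exact hg φ₀ (Finset.mem_insert_self _ _) _
    obtain ⟨c, -, τ, hτ, hct⟩ := tendsto_subseq_of_bounded Metric.isBounded_closedBall hb
    refine ⟨σ ∘ τ, hσ.comp hτ, ?_⟩
    intro φ hφ
    rcases Finset.mem_insert.mp hφ with rfl | hφI
    · exact ⟨c, hct⟩
    · obtain ⟨c', hc'⟩ := hconv φ hφI
      exact ⟨c', hc'.comp hτ.tendsto_atTop⟩

-- small-perturbation continuity lemma
lemma exists_eta (m : ℕ) (hm : Even m) (hm0 : 0 < m) (s : ℂ) (d : ℝ) (hd : 0 < d) :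
    ∃ η > (0:ℝ), ∀ a : ℂ, ‖a‖ < η →
      ‖(a + s)^m - a^m - s^m‖ < d ∧ ‖(a - s)^m - a^m - s^m‖ < d := by
  have hF : ContinuousAt (fun a : ℂ => (a + s)^m - a^m - s^m) 0 := by fun_prop
  have hG : ContinuousAt (fun a : ℂ => (a - s)^m - a^m - s^m) 0 := by fun_prop
  have hF0 : (0 + s)^m - 0^m - s^m = 0 := by
    rw [zero_add, zero_pow hm0.ne']; ring
  have hG0 : ((0:ℂ) - s)^m - 0^m - s^m = 0 := by
    rw [zero_sub, hm.neg_pow, zero_pow hm0.ne']; ring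
  rw [Metric.continuousAt_iff] at hF hG
  obtain ⟨η₁, hη₁, hF1⟩ := hF d hd
  obtain ⟨η₂, hη₂, hG1⟩ := hG d hd
  refine ⟨min η₁ η₂, lt_min hη₁ hη₂, fun a ha => ⟨?_, ?_⟩⟩
  · have := hF1 (x := a) (by rw [dist_zero_right]; exact lt_of_lt_of_le ha (min_le_left _ _))
    rwa [dist_eq_norm, hF0, sub_zero] at this
  · have := hG1 (x := a) (by rw [dist_zero_right]; exact lt_of_lt_of_le ha (min_le_right _ _))
    rwa [dist_eq_norm, hG0, sub_zero] at this


set_option maxHeartbeats 2000000 in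
lemma cluster (m : ℕ) (hm : Even m) (hm0 : 0 < m) (β : Linf) (hβ : β ≠ 0)
    (x : L1) (hx : x ∈ ball (0:L1) 1) :
    ∃ c : ℂ, ∃ r > (0:ℝ), ball c r ⊆ clusterSetW (Tfun m β) (iotaBidual x) := by
  classical
  -- find a nonzero coordinate of β
  have hn : ∃ n, β n ≠ 0 := by
    by_contra h
    push_neg at h
    exact hβ (by ext n; simp [h n])
  obtain ⟨n₀, hn₀⟩ := hn
  have hb0 : (0:ℝ) < ‖β n₀‖ := norm_pos_iff.mpr hn₀
  rw [mem_ball, dist_zero_right] at hx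
  set s₀ : ℝ := (1 - ‖x‖)/3 with hs₀def
  have hs₀ : 0 < s₀ := by rw [hs₀def]; linarith
  set c : ℂ := Tfun m β x with hc
  refine ⟨c, 2 * ‖β n₀‖ * s₀^m, by positivity, ?_⟩
  intro l hl
  rw [mem_ball, dist_eq_norm] at hl
  -- choose the m-th root s
  obtain ⟨s, hs⟩ := IsAlgClosed.exists_pow_nat_eq ((l - c)/(2 * β n₀)) hm0
  have hsid : 2 * β n₀ * s^m = l - c := by
    rw [hs]; field_simp
  have h2c : ‖(2:ℂ) * β n₀‖ = 2 * ‖β n₀‖ := by rw [norm_mul]; norm_num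
  have hsn : ‖s‖ < s₀ := by
    have h1 : ‖s‖^m < s₀^m := by
      rw [← norm_pow, hs, norm_div, h2c, div_lt_iff₀ (by positivity)]
      calc ‖l - c‖ < 2 * ‖β n₀‖ * s₀^m := hl
        _ = s₀ ^ m * (2 * ‖β n₀‖) := by ring
    exact lt_of_pow_lt_pow_left₀ m (le_of_lt hs₀) h1
  -- now prove membership in the cluster set
  intro U hU hzU
  obtain ⟨I, ε, hε, hUin⟩ := weakdual_basic U hU _ hzU
  rw [Metric.mem_closure_iff]
  intro δ hδ
  set δ' : ℝ := δ / (2 * (‖β n₀‖ + 1)) with hδ'def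
  have hδ' : 0 < δ' := by rw [hδ'def]; positivity
  obtain ⟨η, hη, hηspec⟩ := exists_eta m hm hm0 s δ' hδ'
  -- basis vectors along the fiber over n₀
  set e : ℕ → L1 := fun k => lp.single 1 (Nat.pair n₀ k) 1 with he
  have henorm : ∀ k, ‖e k‖ = 1 := fun k => by rw [he]; rw [single_norm]; norm_num
  set g : StrongDual ℂ L1 → ℕ → ℂ := fun φ k => φ (e k) with hg
  have hgbound : ∀ φ ∈ I, ∀ k, ‖g φ k‖ ≤ ‖φ‖ := by
    intro φ _ k
    calc ‖g φ k‖ ≤ ‖φ‖ * ‖e k‖ := φ.le_opNorm _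
      _ = ‖φ‖ := by rw [henorm k, mul_one]
  obtain ⟨σ, hσ, hconv⟩ := exists_conv_subseq I g (fun φ => ‖φ‖) hgbound
  choose lim hlim using hconv
  set ε' : ℝ := ε / (‖s‖ + 1) with hε'def
  have hε' : 0 < ε' := by rw [hε'def]; positivity
  -- two eventual properties
  have E1 : ∀ᶠ k in atTop, ∀ φ ∈ I, ∀ hφ : φ ∈ I,
      dist (g φ (σ k)) (lim φ hφ) < ε'/2 := by
    rw [eventually_all_finset]
    intro φ hφ
    filter_upwards [(hlim φ hφ).eventually
      (Metric.ball_mem_nhds _ (by positivity : (0:ℝ) < ε'/2))] with k hk hφ'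
    exact hk
  have E2 : ∀ᶠ k in atTop, ‖x (Nat.pair n₀ (σ k))‖ < η := by
    have h0 : Tendsto (fun j => ‖x j‖) atTop (𝓝 0) := (l1_summable_s14 x).tendsto_atTop_zero
    have hj : Tendsto (fun k => Nat.pair n₀ (σ k)) atTop atTop := by
      apply tendsto_atTop_mono (fun k => le_trans (hσ.le_apply) (Nat.right_le_pair n₀ (σ k)))
      exact tendsto_id
    exact (h0.comp hj).eventually (gt_mem_nhds hη)
  obtain ⟨N, hN⟩ := eventually_atTop.mp (E1.and E2)
  -- the two indices
  set j₁ : ℕ := Nat.pair n₀ (σ N) with hj₁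
  set j₂ : ℕ := Nat.pair n₀ (σ (N+1)) with hj₂
  have hj12 : j₁ ≠ j₂ := by
    rw [hj₁, hj₂]
    intro hcon
    have := (Nat.pair_eq_pair.mp hcon).2
    exact absurd this (hσ.injective.ne (by omega))
  -- the perturbed point
  set y : L1 := x + lp.single 1 j₁ s - lp.single 1 j₂ s with hy
  have ycoord : ∀ j, y j = x j + (if j = j₁ then s else 0) - (if j = j₂ then s else 0) := by
    intro j
    rw [hy]
    have h1 : ((x + lp.single 1 j₁ s - lp.single 1 j₂ s : L1) : ∀ _ : ℕ, ℂ) j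
        = x j + (lp.single 1 j₁ s : L1) j - (lp.single 1 j₂ s : L1) j := by
      rw [lp.coeFn_sub, lp.coeFn_add]; rfl
    rw [h1, single_coord, single_coord]
  have hynorm : ‖y‖ < 1 := by
    have h1 : ‖y‖ ≤ ‖x‖ + ‖s‖ + ‖s‖ := by
      rw [hy]
      calc ‖x + lp.single 1 j₁ s - lp.single 1 j₂ s‖
          ≤ ‖x + lp.single 1 j₁ s‖ + ‖(lp.single 1 j₂ s : L1)‖ := norm_sub_le _ _
        _ ≤ ‖x‖ + ‖(lp.single 1 j₁ s : L1)‖ + ‖(lp.single 1 j₂ s : L1)‖ := by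
            have := norm_add_le x (lp.single 1 j₁ s : L1)
            linarith
        _ = ‖x‖ + ‖s‖ + ‖s‖ := by rw [single_norm, single_norm]
    have : s₀ = (1 - ‖x‖)/3 := hs₀def
    linarith
  have hyball : y ∈ ball (0:L1) 1 := by rw [mem_ball, dist_zero_right]; exact hynorm
  -- membership of y in U
  have hyU : StrongDual.toWeakDual (iotaBidual y) ∈ U := by
    apply hUin
    intro φ hφ
    have hev : ∀ w : L1, (StrongDual.toWeakDual (iotaBidual w)) φ = φ w := fun w => rfl
    rw [hev, hev]
    have hyx : φ y - φ x = s * (g φ (σ N) - g φ (σ (N+1))) := by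
      rw [← map_sub]
      have h1 : y - x = lp.single 1 j₁ s - lp.single 1 j₂ s := by rw [hy]; abel
      have h2 : ∀ j : ℕ, (lp.single 1 j s : L1) = s • lp.single 1 j (1:ℂ) := by
        intro j
        rw [← lp.single_smul]
        congr 1
        simp
      rw [h1, h2, h2, map_sub, map_smul, map_smul]
      rw [hg]
      simp only [smul_eq_mul]
      ring
    rw [hyx, norm_mul]
    have hclose : ‖g φ (σ N) - g φ (σ (N+1))‖ < ε' := by
      have d1 := ((hN N (le_refl N)).1 φ hφ hφ)
      have d2 := ((hN (N+1) (by omega)).1 φ hφ hφ)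
      calc ‖g φ (σ N) - g φ (σ (N+1))‖
          = dist (g φ (σ N)) (g φ (σ (N+1))) := (dist_eq_norm _ _).symm
        _ ≤ dist (g φ (σ N)) (lim φ hφ) + dist (g φ (σ (N+1))) (lim φ hφ) :=
            dist_triangle_right _ _ _
        _ < ε'/2 + ε'/2 := add_lt_add d1 d2
        _ = ε' := by ring
    calc ‖s‖ * ‖g φ (σ N) - g φ (σ (N+1))‖ ≤ ‖s‖ * ε' := by
          apply mul_le_mul_of_nonneg_left (le_of_lt hclose) (norm_nonneg s)
      _ < ε := by
          rw [hε'def]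
          rw [mul_div_assoc']
          rw [div_lt_iff₀ (by positivity)]
          nlinarith [norm_nonneg s]
  -- the value of Tfun at y
  have hcoeff1 : coeff β j₁ = β n₀ := by rw [coeff, hj₁, Nat.unpair_pair]
  have hcoeff2 : coeff β j₂ = β n₀ := by rw [coeff, hj₂, Nat.unpair_pair]
  have hyc1 : y j₁ = x j₁ + s := by rw [ycoord j₁, if_pos rfl, if_neg hj12]; ring
  have hyc2 : y j₂ = x j₂ - s := by rw [ycoord j₂, if_neg (Ne.symm hj12), if_pos rfl]; ring
  have hval : Tfun m β y - Tfun m β x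
      = β n₀ * ((x j₁ + s)^m - (x j₁)^m) + β n₀ * ((x j₂ - s)^m - (x j₂)^m) := by
    have hsum1 := summable_pow hm0 β y
    have hsum2 := summable_pow hm0 β x
    rw [Tfun, Tfun, ← Summable.tsum_sub hsum1 hsum2]
    rw [tsum_eq_sum (s := {j₁, j₂}) ?_]
    · rw [Finset.sum_pair hj12]
      rw [hcoeff1, hcoeff2, hyc1, hyc2]
      ring
    · intro j hj
      simp only [Finset.mem_insert, Finset.mem_singleton] at hj
      push_neg at hj
      have : y j = x j := by rw [ycoord j, if_neg hj.1, if_neg hj.2]; ring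
      rw [this]; ring
  -- the distance to l
  have herr : dist l (Tfun m β y) < δ := by
    have hx1 : ‖x j₁‖ < η := (hN N (le_refl N)).2
    have hx2 : ‖x j₂‖ < η := (hN (N+1) (by omega)).2
    have hF := (hηspec (x j₁) hx1).1
    have hG := (hηspec (x j₂) hx2).2
    have hdiff : l - Tfun m β y
        = -(β n₀ * (((x j₁ + s)^m - (x j₁)^m - s^m) + ((x j₂ - s)^m - (x j₂)^m - s^m))) := by
      have : l = c + 2 * β n₀ * s^m := by linear_combination -hsid
      rw [this, hc]
      have h5 : Tfun m β y = Tfun m β x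
          + (β n₀ * ((x j₁ + s)^m - (x j₁)^m) + β n₀ * ((x j₂ - s)^m - (x j₂)^m)) := by
        rw [← hval]; ring
      rw [h5]; ring
    rw [dist_eq_norm, hdiff, norm_neg, norm_mul]
    calc ‖β n₀‖ * ‖((x j₁ + s)^m - (x j₁)^m - s^m) + ((x j₂ - s)^m - (x j₂)^m - s^m)‖
        ≤ ‖β n₀‖ * (‖(x j₁ + s)^m - (x j₁)^m - s^m‖ + ‖(x j₂ - s)^m - (x j₂)^m - s^m‖) :=
          mul_le_mul_of_nonneg_left (norm_add_le _ _) (norm_nonneg _)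
      _ < ‖β n₀‖ * (δ' + δ') := by
          exact mul_lt_mul_of_pos_left (add_lt_add hF hG) hb0
      _ ≤ δ := by
          have hid : δ' * (2 * (‖β n₀‖ + 1)) = δ := by
            rw [hδ'def]; field_simp
          nlinarith [hδ'.le, hb0.le]
  refine ⟨Tfun m β y, ⟨y, ⟨?_, hyball⟩, rfl⟩, herr⟩
  exact hyU


def Tmap (m : ℕ) (hm0 : 0 < m) : Linf →ₗ[ℂ] (L1 → ℂ) where
  toFun := fun β => Tfun m β
  map_add' := fun β γ => funext (fun x => Tfun_add m hm0 β γ x)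
  map_smul' := fun c β => funext (fun x => by
    simp only [RingHom.id_apply, Pi.smul_apply, smul_eq_mul]
    exact Tfun_smul m c β x)

end Stmt14Aux

/-- For `E = ℓ₁` (complex) and any even positive integer `m`, there is a
linear isometry `T` from `ℓ_∞` into the continuous `m`-homogeneous polynomials on `ℓ₁`
(with the sup norm over the open unit ball `B`) such that for every `β ≠ 0` and every
`x ∈ B`, the cluster set `Cl(Tβ, x)` contains a disk of positive radius. -/
theorem stmt14 (m : ℕ) (hm : Even m) (hm0 : 0 < m) :
    ∃ T : lp (fun _ : ℕ => ℂ) ⊤ →ₗ[ℂ] (lp (fun _ : ℕ => ℂ) 1 → ℂ),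
      (∀ β, ∃ A : ContinuousMultilinearMap ℂ (fun _ : Fin m => lp (fun _ : ℕ => ℂ) 1) ℂ,
        ∀ x : lp (fun _ : ℕ => ℂ) 1, T β x = A (fun _ => x)) ∧
      (∀ β, sSup ((fun x => ‖T β x‖) '' ball (0 : lp (fun _ : ℕ => ℂ) 1) 1) = ‖β‖) ∧
      Function.Injective T ∧
      (∀ β, β ≠ 0 → ∀ x ∈ ball (0 : lp (fun _ : ℕ => ℂ) 1) 1,
        ∃ c : ℂ, ∃ r > (0 : ℝ), ball c r ⊆ clusterSetW (T β) (iotaBidual x)) := by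
  refine ⟨Tmap m hm0, ?_, ?_, ?_, ?_⟩
  · intro β
    exact ⟨polyA hm0 β, fun x => (polyA_diag hm0 β x).symm⟩
  · intro β
    exact sSup_eq m hm0 β
  · intro β₁ β₂ h
    have h0 : Tmap m hm0 (β₁ - β₂) = 0 := by
      rw [map_sub, h, sub_self]
    have hnorm : ‖β₁ - β₂‖ = 0 := by
      rw [← sSup_eq m hm0 (β₁ - β₂)]
      have himg : (fun x => ‖Tmap m hm0 (β₁ - β₂) x‖) '' ball (0 : L1) 1 = {0} := by
        have hfun : (fun x : L1 => ‖Tmap m hm0 (β₁ - β₂) x‖) = fun _ => (0:ℝ) := by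
          funext x
          rw [h0]
          simp
        rw [hfun]
        exact Set.Nonempty.image_const ⟨0, by simp⟩ 0
      have : sSup ((fun x => ‖Tfun m (β₁ - β₂) x‖) '' ball (0 : L1) 1)
          = sSup ((fun x => ‖Tmap m hm0 (β₁ - β₂) x‖) '' ball (0 : L1) 1) := rfl
      rw [this, himg, csSup_singleton]
    rw [← sub_eq_zero]
    exact norm_eq_zero.mp hnorm
  · intro β hβ x hx
    exact cluster m hm hm0 β hβ x hx
end
end

section
/- In the complex Banach space ℓ_1, for every infinite subset I ⊆ ℕ and every N ∈ ℕ, the vector 0 belongs to the closure, in the weak topology σ(ℓ_1, ℓ_∞), of the set {(e_s − e_t)/2 : s, t ∈ I, s > t ≥ N}, where (e_n) denotes the canonical unit vector basis of ℓ_1. -/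
open Metric Set Filter
open scoped ENNReal NNReal

noncomputable section

variable {E : Type*} [NormedAddCommGroup E] [NormedSpace ℂ E]

open scoped Topology in
set_option maxHeartbeats 1000000 in
/-- In complex `ℓ₁`, for every infinite `I ⊆ ℕ` and every `N`, the vector
`0` lies in the weak (`σ(ℓ₁, ℓ_∞)`) closure of `{(e_s − e_t)/2 : s, t ∈ I, s > t ≥ N}`. -/
theorem stmt16 (I : Set ℕ) (hI : I.Infinite) (N : ℕ) :
    (0 : WeakSpace ℂ (lp (fun _ : ℕ => ℂ) 1)) ∈
      closure (toWeakSpace ℂ (lp (fun _ : ℕ => ℂ) 1) ''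
        {y : lp (fun _ : ℕ => ℂ) 1 | ∃ s ∈ I, ∃ t ∈ I, N ≤ t ∧ t < s ∧
          y = (2 : ℂ)⁻¹ • (lp.single 1 s (1 : ℂ) - lp.single 1 t (1 : ℂ))}) := by
  classical
  set E := lp (fun _ : ℕ => ℂ) 1 with hE
  rw [mem_closure_iff_nhds]
  intro U hU
  set B := (topDualPairing ℂ E).flip with hB
  have hg : 𝓝 (0 : WeakSpace ℂ E) =
      Filter.comap (fun (z : WeakSpace ℂ E) (y : E →L[ℂ] ℂ) => B z y)
        (𝓝 (fun y : E →L[ℂ] ℂ => B (0 : WeakSpace ℂ E) y)) :=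
    nhds_induced _ _
  have h0 : (fun y : E →L[ℂ] ℂ => B (0 : WeakSpace ℂ E) y) = (fun _ => (0 : ℂ)) := by
    funext y; simp [hB]; exact LinearMap.map_zero₂ _ y
  rw [hg, h0, Filter.mem_comap] at hU
  obtain ⟨V, hV, hVU⟩ := hU
  rw [nhds_pi] at hV
  obtain ⟨I₀, hI₀fin, t, ht, htV⟩ := Filter.mem_pi.mp hV
  -- radii
  have hex : ∀ f, ∃ ε > 0, ball (0 : ℂ) ε ⊆ t f := fun f => Metric.mem_nhds_iff.mp (ht f)
  set r : (E →L[ℂ] ℂ) → ℝ := fun f => (hex f).choose with hr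
  have hr0 : ∀ f, 0 < r f := fun f => (hex f).choose_spec.1
  have hrt : ∀ f, ball (0 : ℂ) (r f) ⊆ t f := fun f => (hex f).choose_spec.2
  set F := hI₀fin.toFinset with hF
  obtain ⟨ε, hε, hεr⟩ : ∃ ε > 0, ∀ f ∈ I₀, ε ≤ r f := by
    rcases F.eq_empty_or_nonempty with h | h
    · refine ⟨1, one_pos, fun f hf => absurd ?_ (Finset.notMem_empty f)⟩
      rw [← h]; exact hI₀fin.mem_toFinset.mpr hf
    · refine ⟨F.inf' h r, ?_, fun f hf => Finset.inf'_le r (hI₀fin.mem_toFinset.mpr hf)⟩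
      exact (Finset.lt_inf'_iff h).mpr fun f _ => hr0 f
  -- the infinite index set
  have hI' : (I ∩ Set.Ici N).Infinite := by
    have := hI.diff (Set.finite_Iio N)
    rwa [Set.diff_eq, Set.compl_Iio] at this
  set I' := I ∩ Set.Ici N with hI'def
  -- the map into a compact set
  have hsingle : ∀ n : ℕ, ‖(lp.single 1 n (1 : ℂ) : E)‖ = 1 := by
    intro n
    have := lp.norm_single (E := fun _ : ℕ => ℂ) (p := 1) (by norm_num) n (1 : ℂ)
    simpa using this
  set φ : ℕ → (↥F → ℂ) := fun n f => (f : E →L[ℂ] ℂ) (lp.single 1 n (1 : ℂ)) with hφdef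
  have hφ : ∀ n, φ n ∈ Set.pi Set.univ
      (fun f : ↥F => closedBall (0 : ℂ) ‖(f : E →L[ℂ] ℂ)‖) := by
    intro n f _
    rw [mem_closedBall, dist_zero_right]
    have h1 := f.1.le_opNorm (lp.single 1 n (1 : ℂ) : E)
    rwa [hsingle n, mul_one] at h1
  have hcpt : IsCompact (Set.pi Set.univ
      (fun f : ↥F => closedBall (0 : ℂ) ‖(f : E →L[ℂ] ℂ)‖)) :=
    isCompact_univ_pi fun f => isCompact_closedBall _ _
  obtain ⟨T, hTfin, hTcover⟩ := (totallyBounded_iff.mp hcpt.totallyBounded) ε hε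
  -- pigeonhole
  have hcover : I' ⊆ ⋃ y ∈ T, {n ∈ I' | φ n ∈ ball y ε} := by
    intro n hn
    obtain ⟨y, hy, hny⟩ := Set.mem_iUnion₂.mp (hTcover (hφ n))
    exact Set.mem_iUnion₂.mpr ⟨y, hy, hn, hny⟩
  have hpig : ∃ y ∈ T, {n ∈ I' | φ n ∈ ball y ε}.Infinite := by
    by_contra h
    push_neg at h
    exact (hI'.mono hcover) (Set.Finite.biUnion hTfin h)
  obtain ⟨y, hy, hinf⟩ := hpig
  obtain ⟨t₀, ht₀⟩ := hinf.nonempty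
  obtain ⟨s₀, hs₀, hst⟩ := hinf.exists_gt t₀
  set x : E := (2 : ℂ)⁻¹ • (lp.single 1 s₀ (1 : ℂ) - lp.single 1 t₀ (1 : ℂ)) with hx
  refine ⟨toWeakSpace ℂ E x, ?_, ⟨x, ⟨s₀, hs₀.1.1, t₀, ht₀.1.1, ht₀.1.2, hst, rfl⟩, rfl⟩⟩
  apply hVU
  show (fun y : E →L[ℂ] ℂ => B (toWeakSpace ℂ E x) y) ∈ V
  apply htV
  intro f hf
  show B (toWeakSpace ℂ E x) f ∈ t f
  apply hrt f
  rw [mem_ball, dist_zero_right]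
  have hBx : B (toWeakSpace ℂ E x) f = f x := rfl
  rw [hBx]
  have hfF : f ∈ F := hI₀fin.mem_toFinset.mpr hf
  have hdist : dist (φ s₀ ⟨f, hfF⟩) (φ t₀ ⟨f, hfF⟩) < 2 * ε := by
    calc dist (φ s₀ ⟨f, hfF⟩) (φ t₀ ⟨f, hfF⟩) ≤ dist (φ s₀) (φ t₀) :=
          dist_le_pi_dist (φ s₀) (φ t₀) ⟨f, hfF⟩
      _ ≤ dist (φ s₀) y + dist y (φ t₀) := dist_triangle _ _ _
      _ < ε + ε := by
          exact add_lt_add (mem_ball.mp hs₀.2) (by rw [dist_comm]; exact mem_ball.mp ht₀.2)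
      _ = 2 * ε := by ring
  have hfx : f x = (2 : ℂ)⁻¹ * (φ s₀ ⟨f, hfF⟩ - φ t₀ ⟨f, hfF⟩) := by
    rw [hx, map_smul, map_sub]
    rfl
  rw [hfx]
  rw [norm_mul]
  have h2 : ‖(2 : ℂ)⁻¹‖ = 2⁻¹ := by norm_num
  rw [h2]
  have : ‖φ s₀ ⟨f, hfF⟩ - φ t₀ ⟨f, hfF⟩‖ < 2 * ε := by
    rw [← dist_eq_norm]; exact hdist
  calc (2:ℝ)⁻¹ * ‖φ s₀ ⟨f, hfF⟩ - φ t₀ ⟨f, hfF⟩‖ < 2⁻¹ * (2 * ε) := by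
        exact mul_lt_mul_of_pos_left this (by norm_num)
    _ = ε := by ring
    _ ≤ r f := hεr f hf
end
end

section
/- Let E be a complex Banach space with open unit ball B, let f ∈ H^∞(B), and let z be any point of the closed unit ball of the bidual E**. Then the cluster set Cl(f,z) is a nonempty compact connected subset of ℂ. -/
open Metric Set Filter

noncomputable section

variable {E : Type*} [NormedAddCommGroup E] [NormedSpace ℂ E]

/-! ### Auxiliary lemmas -/

theorem goldstine_aux17 (z : StrongDual ℂ (StrongDual ℂ E)) (hz : ‖z‖ ≤ 1)
    (s : Finset (StrongDual ℂ E)) {ε : ℝ} (hε : 0 < ε) :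
    ∃ x ∈ ball (0 : E) 1, ∀ φ ∈ s, ‖φ x - z φ‖ < ε := by
  classical
  let T : E →ₗ[ℂ] (↥s → ℂ) :=
    LinearMap.pi fun φ : ↥s => ((φ : StrongDual ℂ E) : E →ₗ[ℂ] ℂ)
  set S : Set (↥s → ℂ) := closure (T '' ball (0 : E) 1) with hSdef
  have hS0 : (0 : ↥s → ℂ) ∈ S :=
    subset_closure ⟨0, by simp [mem_ball], by simp⟩
  have hSconv : Convex ℝ S := by
    have : Convex ℝ (T '' ball (0 : E) 1) :=
      (convex_ball (0 : E) 1).linear_image (T.restrictScalars ℝ)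
    exact this.closure
  have hcS : (fun φ : ↥s => z φ) ∈ S := by
    by_contra hc
    obtain ⟨g, u, hgS, hgc⟩ :=
      RCLike.geometric_hahn_banach_closed_point (𝕜 := ℂ) hSconv isClosed_closure hc
    have hu0 : 0 < u := by simpa using hgS 0 hS0
    set a : ↥s → ℂ := fun φ => g (Pi.single φ 1) with ha
    have hrep : ∀ y : ↥s → ℂ, g y = ∑ φ : ↥s, y φ * a φ := by
      intro y
      conv_lhs => rw [← Finset.univ_sum_single y]
      rw [map_sum]
      refine Finset.sum_congr rfl fun φ _ => ?_
      have : Pi.single φ (y φ) = y φ • (Pi.single φ 1 : ↥s → ℂ) := by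
        ext j
        by_cases h : j = φ <;> simp [Pi.single_apply, h]
      rw [this, map_smul, smul_eq_mul]
    set ψ : StrongDual ℂ E := ∑ φ : ↥s, a φ • (φ : StrongDual ℂ E) with hψdef
    have hψ : ∀ x : E, ψ x = g (T x) := by
      intro x
      rw [hrep (T x)]
      simp only [hψdef, ContinuousLinearMap.sum_apply, ContinuousLinearMap.smul_apply,
        smul_eq_mul]
      refine Finset.sum_congr rfl fun φ _ => ?_
      rw [mul_comm]
      rfl
    have hball : ∀ x ∈ ball (0 : E) 1, ‖g (T x)‖ ≤ u := by
      intro x hx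
      rcases eq_or_ne (g (T x)) 0 with h0 | h0
      · rw [h0]; simpa using hu0.le
      · set θ : ℂ := ‖g (T x)‖ / g (T x) with hθ
        have hθx : θ • x ∈ ball (0 : E) 1 := by
          rw [mem_ball_zero_iff] at hx ⊢
          rw [norm_smul, hθ, norm_div, Complex.norm_real, norm_norm,
            div_self (norm_ne_zero_iff.mpr h0), one_mul]
          exact hx
        have : g (T (θ • x)) = (‖g (T x)‖ : ℂ) := by
          rw [map_smul, map_smul, smul_eq_mul, hθ, div_mul_cancel₀ _ h0]
        have hlt := hgS (T (θ • x)) (subset_closure ⟨θ • x, hθx, rfl⟩)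
        rw [this] at hlt
        simpa using hlt.le
    have hψnorm : ‖ψ‖ ≤ u := by
      refine ContinuousLinearMap.opNorm_le_bound ψ hu0.le fun x => ?_
      rcases eq_or_ne x 0 with rfl | hx0
      · simp [mul_nonneg hu0.le (norm_nonneg (0 : E))]
      · by_contra hcon
        push_neg at hcon
        have hxpos : (0 : ℝ) < ‖x‖ := norm_pos_iff.mpr hx0
        have hψxpos : 0 < ‖ψ x‖ := lt_of_le_of_lt (mul_nonneg hu0.le hxpos.le) hcon
        set r : ℝ := (u * ‖x‖ + ‖ψ x‖) / (2 * ‖ψ x‖) with hr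
        have hr0 : 0 < r := by positivity
        have hr1 : r < 1 := by
          rw [hr, div_lt_one (by positivity)]
          nlinarith
        have key : r * ‖ψ x‖ ≤ u * ‖x‖ := by
          have hy : ((r / ‖x‖ : ℝ) : ℂ) • x ∈ ball (0 : E) 1 := by
            rw [mem_ball_zero_iff, norm_smul, Complex.norm_real, Real.norm_eq_abs,
              abs_of_pos (by positivity), div_mul_cancel₀ _ hxpos.ne']
            exact hr1
          have := hball _ hy
          rw [← hψ] at this
          rw [map_smul, norm_smul, Complex.norm_real, Real.norm_eq_abs,
            abs_of_pos (by positivity)] at this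
          rw [div_mul_eq_mul_div, div_le_iff₀ hxpos] at this
          linarith
        rw [hr, div_mul_eq_mul_div, div_le_iff₀ (by positivity)] at key
        nlinarith
    have hzψ : z ψ = g (fun φ : ↥s => z φ) := by
      rw [hrep]
      simp only [hψdef, map_sum, map_smul, smul_eq_mul]
      exact Finset.sum_congr rfl fun φ _ => mul_comm _ _
    have h1 : Complex.re (z ψ) ≤ u := by
      calc Complex.re (z ψ) ≤ ‖z ψ‖ := Complex.re_le_norm _
        _ ≤ ‖z‖ * ‖ψ‖ := z.le_opNorm ψ
        _ ≤ 1 * u := mul_le_mul hz hψnorm (norm_nonneg _) zero_le_one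
        _ = u := one_mul u
    rw [hzψ] at h1
    exact absurd h1 (not_le.mpr hgc)
  obtain ⟨b, hb, hdist⟩ := Metric.mem_closure_iff.mp hcS ε hε
  obtain ⟨x, hx, rfl⟩ := hb
  refine ⟨x, hx, fun φ hφ => ?_⟩
  have := (dist_pi_lt_iff hε).mp hdist ⟨φ, hφ⟩
  rw [dist_eq_norm] at this
  rw [norm_sub_rev]
  exact this

theorem basic_nbhd17 {U : Set (WeakDual ℂ (StrongDual ℂ E))} (hU : IsOpen U)
    {z : WeakDual ℂ (StrongDual ℂ E)} (hzU : z ∈ U) :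
    ∃ (s : Finset (StrongDual ℂ E)) (ε : ℝ), 0 < ε ∧
      ∀ w : WeakDual ℂ (StrongDual ℂ E), (∀ φ ∈ s, ‖w φ - z φ‖ < ε) → w ∈ U := by
  classical
  have hUn : U ∈ nhds z := hU.mem_nhds hzU
  erw [nhds_induced (fun (x : WeakDual ℂ (StrongDual ℂ E))
      (y : StrongDual ℂ E) => x y) z] at hUn
  obtain ⟨t, ht, htU⟩ := Filter.mem_comap.mp hUn
  rw [nhds_pi, Filter.mem_pi'] at ht
  obtain ⟨I, v, hv, hvt⟩ := ht
  have hδ : ∀ φ : StrongDual ℂ E, ∃ δ : ℝ, 0 < δ ∧ ball (z φ) δ ⊆ v φ := by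
    intro φ
    obtain ⟨δ, hδ0, hδ⟩ := Metric.mem_nhds_iff.mp (hv φ)
    exact ⟨δ, hδ0, hδ⟩
  choose δ hδ0 hδb using hδ
  refine ⟨I, (insert 1 (I.image δ)).min' (by simp), ?_, ?_⟩
  · rw [Finset.lt_min'_iff]
    intro y hy
    simp only [Finset.mem_insert, Finset.mem_image] at hy
    rcases hy with rfl | ⟨φ, _, rfl⟩
    · exact one_pos
    · exact hδ0 φ
  · intro w hw
    apply htU
    apply hvt
    intro φ hφ
    apply hδb φ
    rw [mem_ball, dist_eq_norm]
    refine lt_of_lt_of_le (hw φ hφ) ?_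
    exact Finset.min'_le _ _ (by simp [Finset.mem_image]; exact Or.inr ⟨φ, hφ, rfl⟩)

/-- the approximating set -/
def AAset (z : StrongDual ℂ (StrongDual ℂ E))
    (s : Finset (StrongDual ℂ E)) (ε : ℝ) : Set E :=
  {x | x ∈ ball (0 : E) 1 ∧ ∀ φ ∈ s, ‖φ x - z φ‖ < ε}

theorem AAset_convex (z : StrongDual ℂ (StrongDual ℂ E))
    (s : Finset (StrongDual ℂ E)) (ε : ℝ) : Convex ℝ (AAset z s ε) := by
  intro x hx y hy a b ha hb hab
  refine ⟨convex_ball (0 : E) 1 hx.1 hy.1 ha hb hab, fun φ hφ => ?_⟩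
  have hxφ := hx.2 φ hφ
  have hyφ := hy.2 φ hφ
  have heq : φ (a • x + b • y) - z φ = a • (φ x - z φ) + b • (φ y - z φ) := by
    rw [map_add, φ.map_smul_of_tower, φ.map_smul_of_tower]
    have : (a : ℝ) • (z φ) + (b : ℝ) • (z φ) = z φ := by
      rw [← add_smul, hab, one_smul]
    rw [smul_sub, smul_sub]
    nth_rewrite 1 [← this]
    abel
  rw [heq]
  calc ‖a • (φ x - z φ) + b • (φ y - z φ)‖
      ≤ ‖a • (φ x - z φ)‖ + ‖b • (φ y - z φ)‖ := norm_add_le _ _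
    _ = a * ‖φ x - z φ‖ + b * ‖φ y - z φ‖ := by
        rw [norm_smul, norm_smul, Real.norm_eq_abs, Real.norm_eq_abs,
          abs_of_nonneg ha, abs_of_nonneg hb]
    _ < ε := by
        rcases eq_or_lt_of_le ha with rfl | ha'
        · rw [zero_add] at hab
          subst hab
          simpa using hyφ
        · nlinarith [norm_nonneg (φ y - z φ)]

/-- For a complex Banach space `E`, `f ∈ H^∞(B)` and `z` in the closed
unit ball of the bidual `E**`, the cluster set `Cl(f, z)` is a nonempty compact connected
subset of ℂ. -/
theorem stmt17 (E : Type*) [NormedAddCommGroup E] [NormedSpace ℂ E] [CompleteSpace E]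
    (f : E → ℂ) (hf : MemHinf f)
    (z : StrongDual ℂ (StrongDual ℂ E)) (hz : ‖z‖ ≤ 1) :
    (clusterSetW f z).Nonempty ∧ IsCompact (clusterSetW f z) ∧
      IsConnected (clusterSetW f z) := by
  classical
  obtain ⟨hdiff, C, hC⟩ := hf
  let ι := Finset (StrongDual ℂ E) × {ε : ℝ // 0 < ε}
  haveI : Nonempty ι := ⟨(∅, ⟨1, one_pos⟩)⟩
  let K : ι → Set ℂ := fun p => closure (f '' AAset z p.1 p.2.1)
  have hAsub : ∀ p : ι, AAset z p.1 p.2.1 ⊆ ball (0 : E) 1 := fun p x hx => hx.1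
  have hKne : ∀ p, (K p).Nonempty := by
    intro p
    obtain ⟨x, hx, hxs⟩ := goldstine_aux17 z hz p.1 p.2.2
    exact ⟨f x, subset_closure ⟨x, ⟨hx, hxs⟩, rfl⟩⟩
  have hKclosed : ∀ p, IsClosed (K p) := fun p => isClosed_closure
  have hKsub : ∀ p, K p ⊆ closedBall (0 : ℂ) (max C 0) := by
    intro p
    apply closure_minimal _ Metric.isClosed_closedBall
    rintro _ ⟨x, hx, rfl⟩
    rw [mem_closedBall_zero_iff]
    exact (hC x hx.1).trans (le_max_left _ _)
  have hKcpt : ∀ p, IsCompact (K p) := fun p =>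
    (isCompact_closedBall (0 : ℂ) _).of_isClosed_subset (hKclosed p) (hKsub p)
  have hKprec : ∀ p, IsPreconnected (K p) := by
    intro p
    apply IsPreconnected.closure
    apply IsPreconnected.image
    · exact (AAset_convex z p.1 p.2.1).isPreconnected
    · exact hdiff.continuousOn.mono (hAsub p)
  have hdir : Directed (· ⊇ ·) K := by
    intro p q
    refine ⟨(p.1 ∪ q.1, ⟨min p.2.1 q.2.1, lt_min p.2.2 q.2.2⟩), ?_, ?_⟩
    · exact closure_mono (image_mono (f := f) fun x hx =>
        ⟨hx.1, fun φ hφ => (hx.2 φ (Finset.mem_union_left _ hφ)).trans_le (min_le_left _ _)⟩)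
    · exact closure_mono (image_mono (f := f) fun x hx =>
        ⟨hx.1, fun φ hφ => (hx.2 φ (Finset.mem_union_right _ hφ)).trans_le (min_le_right _ _)⟩)
  have hEq : clusterSetW f z = ⋂ p : ι, K p := by
    apply Subset.antisymm
    · intro l hl
      refine mem_iInter.mpr fun p => ?_
      set U : Set (WeakDual ℂ (StrongDual ℂ E)) :=
        {w | ∀ φ ∈ p.1, ‖w φ - z φ‖ < p.2.1} with hUdef
      have hUopen : IsOpen U := by
        have : U = ⋂ φ ∈ p.1,
            {w : WeakDual ℂ (StrongDual ℂ E) | ‖w φ - z φ‖ < p.2.1} := by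
          ext w; simp [hUdef]
        rw [this]
        refine isOpen_biInter_finset fun φ hφ => ?_
        have hc : Continuous fun w : WeakDual ℂ (StrongDual ℂ E) => ‖w φ - z φ‖ :=
          ((WeakDual.eval_continuous φ).sub continuous_const).norm
        exact isOpen_lt hc continuous_const
      have hzU : StrongDual.toWeakDual z ∈ U := fun φ hφ => by
        simpa using p.2.2
      have hpre : (fun x : E => StrongDual.toWeakDual (iotaBidual x)) ⁻¹' U
          ∩ ball (0 : E) 1 = AAset z p.1 p.2.1 := by
        ext x
        constructor
        · rintro ⟨hxU, hxb⟩
          exact ⟨hxb, fun φ hφ => hxU φ hφ⟩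
        · rintro ⟨hxb, hxs⟩
          exact ⟨fun φ hφ => hxs φ hφ, hxb⟩
      have := hl U hUopen hzU
      rwa [hpre] at this
    · intro l hl U hUopen hzU
      obtain ⟨s, ε, hε, hU⟩ := basic_nbhd17 hUopen hzU
      have hsub : AAset z s ε ⊆
          (fun x : E => StrongDual.toWeakDual (iotaBidual x)) ⁻¹' U ∩ ball (0 : E) 1 := by
        intro x hx
        exact ⟨hU _ fun φ hφ => hx.2 φ hφ, hx.1⟩
      exact closure_mono (image_mono (f := f) hsub) (mem_iInter.mp hl (s, ⟨ε, hε⟩))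
  have hne : (⋂ p, K p).Nonempty :=
    IsCompact.nonempty_iInter_of_directed_nonempty_isCompact_isClosed K hdir hKne hKcpt hKclosed
  have hcpt : IsCompact (⋂ p, K p) :=
    (hKcpt (Classical.arbitrary ι)).of_isClosed_subset (isClosed_iInter hKclosed)
      (iInter_subset K _)
  have hprec : IsPreconnected (⋂ p, K p) := by
    intro u v hu hv hcov hnu hnv
    by_contra hcon
    rw [Set.not_nonempty_iff_eq_empty] at hcon
    have hnotboth : ∀ x ∈ ⋂ p, K p, ¬(x ∈ u ∧ x ∈ v) := by
      intro x hx hx'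
      exact Set.eq_empty_iff_forall_notMem.mp hcon x ⟨hx, hx'.1, hx'.2⟩
    have hAcpt : IsCompact ((⋂ p, K p) \ v) := hcpt.diff hv
    have hBcpt : IsCompact ((⋂ p, K p) \ u) := hcpt.diff hu
    have hdisj : Disjoint ((⋂ p, K p) \ v) ((⋂ p, K p) \ u) := by
      rw [Set.disjoint_left]
      rintro x ⟨hx1, hxv⟩ ⟨_, hxu⟩
      rcases hcov hx1 with h | h
      · exact hxu h
      · exact hxv h
    obtain ⟨u', v', hu', hv', hAu', hBv', hd⟩ :=
      SeparatedNhds.of_isCompact_isCompact hAcpt hBcpt hdisj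
    have hcov' : (⋂ p, K p) ⊆ u' ∪ v' := by
      intro x hx
      rcases hcov hx with h | h
      · exact Or.inl (hAu' ⟨hx, fun hv => hnotboth x hx ⟨h, hv⟩⟩)
      · exact Or.inr (hBv' ⟨hx, fun hu => hnotboth x hx ⟨hu, h⟩⟩)
    have hex : ∃ p, K p ⊆ u' ∪ v' := by
      by_contra hno
      push_neg at hno
      have hne' : ∀ p, (K p \ (u' ∪ v')).Nonempty := by
        intro p
        obtain ⟨a, ha, hna⟩ := Set.not_subset.mp (hno p)
        exact ⟨a, ha, hna⟩
      have hdir' : Directed (· ⊇ ·) (fun p => K p \ (u' ∪ v')) := fun p q => by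
        obtain ⟨r, h1, h2⟩ := hdir p q
        exact ⟨r, Set.diff_subset_diff_left h1, Set.diff_subset_diff_left h2⟩
      obtain ⟨x, hx⟩ :=
        IsCompact.nonempty_iInter_of_directed_nonempty_isCompact_isClosed
          (fun p => K p \ (u' ∪ v')) hdir' hne'
          (fun p => (hKcpt p).diff (hu'.union hv'))
          (fun p => (hKclosed p).sdiff (hu'.union hv'))
      have hx1 : x ∈ ⋂ p, K p := mem_iInter.mpr fun p => (mem_iInter.mp hx p).1
      exact (mem_iInter.mp hx (Classical.arbitrary ι)).2 (hcov' hx1)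
    obtain ⟨p, hp⟩ := hex
    have h1 : (K p ∩ u').Nonempty := by
      obtain ⟨x, hx, hxu⟩ := hnu
      exact ⟨x, mem_iInter.mp hx p, hAu' ⟨hx, fun hv => hnotboth x hx ⟨hxu, hv⟩⟩⟩
    have h2 : (K p ∩ v').Nonempty := by
      obtain ⟨x, hx, hxv⟩ := hnv
      exact ⟨x, mem_iInter.mp hx p, hBv' ⟨hx, fun hu => hnotboth x hx ⟨hu, hxv⟩⟩⟩
    obtain ⟨x, hx⟩ := hKprec p u' v' hu' hv' hp h1 h2
    exact Set.disjoint_left.mp hd hx.2.1 hx.2.2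
  rw [hEq]
  exact ⟨hne, hcpt, hne, hprec⟩
end
end
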